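/- arXiv:1101.1705 — 7 statements merged into one kernel-verified Lean document; each statement's English description precedes it below -/
import Mathlib

section
/- Let R be a commutative ring in which 2 is invertible and let Q be a quadratic form on the free module R² (i.e. on Fin 2 → R). Then the R-linear dual of the Clifford algebra Cl(Q) is isomorphic to Cl(Q) both as a left Cl(Q)-module and as a right Cl(Q)-module; concretely, there exists an R-linear functional ξ : Cl(Q) → R such that the R-linear map Cl(Q) → Hom_R(Cl(Q), R) sending a to the functional x ↦ ξ(x·a) is bijective, and the R-linear map sending a to the functional x ↦ ξ(a·x) is also bijective. -/
open CliffordAlgebra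

section Aux
variable {R : Type*} [CommRing R] (Q : QuadraticForm R (Fin 2 → R))

/-- Left multiplication by `m 0 • i + m 1 • j` in the quaternion-like algebra with
basis `1, i, j, k` where `i^2 = a`, `j^2 = b`, `ij = k`, `ji = c - k`. -/
def stmt0F (a b c : R) : (Fin 2 → R) →ₗ[R] (Fin 4 → R) →ₗ[R] (Fin 4 → R) :=
  LinearMap.mk₂ R
    (fun m n => ![a * m 0 * n 1 + c * m 1 * n 1 + b * m 1 * n 2,
                  m 0 * n 0 - b * m 1 * n 3,
                  m 1 * n 0 + a * m 0 * n 3 + c * m 1 * n 3,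
                  m 0 * n 2 - m 1 * n 1])
    (by intro m m' n; funext i; fin_cases i <;> simp <;> ring)
    (by intro r m n; funext i; fin_cases i <;> simp <;> ring)
    (by intro m n n'; funext i; fin_cases i <;> simp <;> ring)
    (by intro m r n; funext i; fin_cases i <;> simp <;> ring)

theorem stmt0hQ (m : Fin 2 → R) :
    Q m = Q ![1,0] * (m 0 * m 0) + Q ![0,1] * (m 1 * m 1)
      + QuadraticMap.polar Q ![1,0] ![0,1] * (m 0 * m 1) := by
  have hm : m = m 0 • ![1,0] + m 1 • ![0,1] := by
    funext i; fin_cases i <;> simp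
  conv_lhs => rw [hm]
  rw [QuadraticMap.map_add ⇑Q, QuadraticMap.map_smul, QuadraticMap.map_smul,
    QuadraticMap.polar_smul_left, QuadraticMap.polar_smul_right]
  simp only [smul_eq_mul]
  ring

theorem stmt0hF : ∀ (m : Fin 2 → R) (x : Fin 4 → R),
    stmt0F (Q ![1,0]) (Q ![0,1]) (QuadraticMap.polar Q ![1,0] ![0,1]) m
      (stmt0F (Q ![1,0]) (Q ![0,1]) (QuadraticMap.polar Q ![1,0] ![0,1]) m x) = Q m • x := by
  intro m x
  funext i
  rw [stmt0hQ Q m]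
  fin_cases i <;>
    simp [stmt0F, LinearMap.mk₂_apply] <;> ring

/-- The "regular representation" linear map `Cl(Q) → R⁴`. -/
noncomputable def stmt0lam : CliffordAlgebra Q →ₗ[R] (Fin 4 → R) :=
  foldr Q (stmt0F (Q ![1,0]) (Q ![0,1]) (QuadraticMap.polar Q ![1,0] ![0,1]))
    (stmt0hF Q) ![1,0,0,0]

/-- The linear functional taking the coefficient of `e₀e₁`. -/
noncomputable def stmt0xi : CliffordAlgebra Q →ₗ[R] R :=
  LinearMap.proj (3 : Fin 4) ∘ₗ stmt0lam Q

-- ξ-table on products of the four basic words.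
theorem xi_one : stmt0xi Q 1 = 0 := by
  simp [stmt0xi, stmt0lam, stmt0F, foldr_one, LinearMap.mk₂_apply]
theorem xi_u : stmt0xi Q (ι Q ![1,0]) = 0 := by
  simp [stmt0xi, stmt0lam, stmt0F, foldr_ι, LinearMap.mk₂_apply]
theorem xi_v : stmt0xi Q (ι Q ![0,1]) = 0 := by
  simp [stmt0xi, stmt0lam, stmt0F, foldr_ι, LinearMap.mk₂_apply]
theorem xi_k : stmt0xi Q (ι Q ![1,0] * ι Q ![0,1]) = 1 := by
  simp [stmt0xi, stmt0lam, stmt0F, foldr_mul, foldr_ι, LinearMap.mk₂_apply]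
theorem xi_uu : stmt0xi Q (ι Q ![1,0] * ι Q ![1,0]) = 0 := by
  simp [stmt0xi, stmt0lam, stmt0F, foldr_mul, foldr_ι, LinearMap.mk₂_apply]
theorem xi_vu : stmt0xi Q (ι Q ![0,1] * ι Q ![1,0]) = -1 := by
  simp [stmt0xi, stmt0lam, stmt0F, foldr_mul, foldr_ι, LinearMap.mk₂_apply]
theorem xi_vv : stmt0xi Q (ι Q ![0,1] * ι Q ![0,1]) = 0 := by
  simp [stmt0xi, stmt0lam, stmt0F, foldr_mul, foldr_ι, LinearMap.mk₂_apply]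
theorem xi_uk : stmt0xi Q (ι Q ![1,0] * (ι Q ![1,0] * ι Q ![0,1])) = 0 := by
  simp [stmt0xi, stmt0lam, stmt0F, foldr_mul, foldr_ι, LinearMap.mk₂_apply]
theorem xi_vk : stmt0xi Q (ι Q ![0,1] * (ι Q ![1,0] * ι Q ![0,1])) = 0 := by
  simp [stmt0xi, stmt0lam, stmt0F, foldr_mul, foldr_ι, LinearMap.mk₂_apply]
theorem xi_ku : stmt0xi Q ((ι Q ![1,0] * ι Q ![0,1]) * ι Q ![1,0]) = 0 := by
  simp [stmt0xi, stmt0lam, stmt0F, foldr_mul, foldr_ι, LinearMap.mk₂_apply]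
theorem xi_kv : stmt0xi Q ((ι Q ![1,0] * ι Q ![0,1]) * ι Q ![0,1]) = 0 := by
  simp [stmt0xi, stmt0lam, stmt0F, foldr_mul, foldr_ι, LinearMap.mk₂_apply]
theorem xi_kk : stmt0xi Q ((ι Q ![1,0] * ι Q ![0,1]) * (ι Q ![1,0] * ι Q ![0,1]))
    = QuadraticMap.polar Q ![1,0] ![0,1] := by
  simp [stmt0xi, stmt0lam, stmt0F, foldr_mul, foldr_ι, LinearMap.mk₂_apply]

/-- `a ↦ (x ↦ ξ (x * a))` as a linear map. -/
noncomputable def stmt0PhiR :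
    CliffordAlgebra Q →ₗ[R] Module.Dual R (CliffordAlgebra Q) where
  toFun a := stmt0xi Q ∘ₗ LinearMap.mulRight R a
  map_add' x y := by ext z; simp [mul_add]
  map_smul' r x := by ext z; simp [mul_smul_comm]

/-- `a ↦ (x ↦ ξ (a * x))` as a linear map. -/
noncomputable def stmt0PhiL :
    CliffordAlgebra Q →ₗ[R] Module.Dual R (CliffordAlgebra Q) where
  toFun a := stmt0xi Q ∘ₗ LinearMap.mulLeft R a
  map_add' x y := by ext z; simp [add_mul]
  map_smul' r x := by ext z; simp [smul_mul_assoc]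

theorem stmt0PhiR_apply (a x : CliffordAlgebra Q) :
    stmt0PhiR Q a x = stmt0xi Q (x * a) := rfl

theorem stmt0PhiL_apply (a x : CliffordAlgebra Q) :
    stmt0PhiL Q a x = stmt0xi Q (a * x) := rfl

/-- Evaluation at a point, as a linear map on the dual. -/
noncomputable def stmt0eval (z : CliffordAlgebra Q) :
    Module.Dual R (CliffordAlgebra Q) →ₗ[R] R :=
  LinearMap.applyₗ z

@[simp] theorem stmt0eval_apply (z : CliffordAlgebra Q)
    (f : Module.Dual R (CliffordAlgebra Q)) : stmt0eval Q z f = f z := rfl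

/-- Inverse of `stmt0PhiR`. -/
noncomputable def stmt0PsiR :
    Module.Dual R (CliffordAlgebra Q) →ₗ[R] CliffordAlgebra Q :=
  (stmt0eval Q (ι Q ![1,0] * ι Q ![0,1])
      - QuadraticMap.polar Q ![1,0] ![0,1] • stmt0eval Q 1).smulRight 1
    - (stmt0eval Q (ι Q ![0,1])).smulRight (ι Q ![1,0])
    + (stmt0eval Q (ι Q ![1,0])).smulRight (ι Q ![0,1])
    + (stmt0eval Q 1).smulRight (ι Q ![1,0] * ι Q ![0,1])

/-- Inverse of `stmt0PhiL`. -/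
noncomputable def stmt0PsiL :
    Module.Dual R (CliffordAlgebra Q) →ₗ[R] CliffordAlgebra Q :=
  (stmt0eval Q (ι Q ![1,0] * ι Q ![0,1])
      - QuadraticMap.polar Q ![1,0] ![0,1] • stmt0eval Q 1).smulRight 1
    + (stmt0eval Q (ι Q ![0,1])).smulRight (ι Q ![1,0])
    - (stmt0eval Q (ι Q ![1,0])).smulRight (ι Q ![0,1])
    + (stmt0eval Q 1).smulRight (ι Q ![1,0] * ι Q ![0,1])

theorem stmt0PsiR_apply (f : Module.Dual R (CliffordAlgebra Q)) :
    stmt0PsiR Q f =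
      (f (ι Q ![1,0] * ι Q ![0,1]) - QuadraticMap.polar Q ![1,0] ![0,1] * f 1) • 1
        - f (ι Q ![0,1]) • ι Q ![1,0] + f (ι Q ![1,0]) • ι Q ![0,1]
        + f 1 • (ι Q ![1,0] * ι Q ![0,1]) := by
  simp only [stmt0PsiR, LinearMap.add_apply, LinearMap.sub_apply, LinearMap.smulRight_apply,
    LinearMap.smul_apply, stmt0eval_apply, smul_eq_mul, sub_smul]

theorem stmt0PsiL_apply (f : Module.Dual R (CliffordAlgebra Q)) :
    stmt0PsiL Q f =
      (f (ι Q ![1,0] * ι Q ![0,1]) - QuadraticMap.polar Q ![1,0] ![0,1] * f 1) • 1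
        + f (ι Q ![0,1]) • ι Q ![1,0] - f (ι Q ![1,0]) • ι Q ![0,1]
        + f 1 • (ι Q ![1,0] * ι Q ![0,1]) := by
  simp only [stmt0PsiL, LinearMap.add_apply, LinearMap.sub_apply, LinearMap.smulRight_apply,
    LinearMap.smul_apply, stmt0eval_apply, smul_eq_mul, sub_smul]

/-- The four words `1, e₀, e₁, e₀e₁` span the Clifford algebra. -/
theorem stmt0span :
    Submodule.span R
      ({1, ι Q ![1,0], ι Q ![0,1], ι Q ![1,0] * ι Q ![0,1]} :
        Set (CliffordAlgebra Q)) = ⊤ := by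
  have hu : ι Q ![1,0] ∈ ({1, ι Q ![1,0], ι Q ![0,1], ι Q ![1,0] * ι Q ![0,1]} :
      Set (CliffordAlgebra Q)) := by simp
  set P : Submodule R (CliffordAlgebra Q) :=
    Submodule.span R ({1, ι Q ![1,0], ι Q ![0,1], ι Q ![1,0] * ι Q ![0,1]} :
      Set (CliffordAlgebra Q)) with hP
  have h1 : (1 : CliffordAlgebra Q) ∈ P := Submodule.subset_span (by simp)
  have hu' : ι Q ![1,0] ∈ P := Submodule.subset_span (by simp)
  have hv' : ι Q ![0,1] ∈ P := Submodule.subset_span (by simp)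
  have hk' : ι Q ![1,0] * ι Q ![0,1] ∈ P := Submodule.subset_span (by simp)
  -- product identities
  have hu2 : ι Q ![1,0] * ι Q ![1,0] = Q ![1,0] • (1 : CliffordAlgebra Q) := by
    rw [ι_sq_scalar, Algebra.algebraMap_eq_smul_one]
  have hv2 : ι Q ![0,1] * ι Q ![0,1] = Q ![0,1] • (1 : CliffordAlgebra Q) := by
    rw [ι_sq_scalar, Algebra.algebraMap_eq_smul_one]
  have hvu : ι Q ![0,1] * ι Q ![1,0] =
      QuadraticMap.polar Q ![1,0] ![0,1] • (1 : CliffordAlgebra Q)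
        - ι Q ![1,0] * ι Q ![0,1] := by
    refine eq_sub_of_add_eq' ?_
    rw [ι_mul_ι_add_swap, Algebra.algebraMap_eq_smul_one]
  have huuv : ι Q ![1,0] * (ι Q ![1,0] * ι Q ![0,1]) = Q ![1,0] • ι Q ![0,1] := by
    rw [← mul_assoc, hu2, smul_mul_assoc, one_mul]
  have huvv : (ι Q ![1,0] * ι Q ![0,1]) * ι Q ![0,1] = Q ![0,1] • ι Q ![1,0] := by
    rw [mul_assoc, hv2, mul_smul_comm, mul_one]
  have huvu : (ι Q ![1,0] * ι Q ![0,1]) * ι Q ![1,0] =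
      QuadraticMap.polar Q ![1,0] ![0,1] • ι Q ![1,0] - Q ![1,0] • ι Q ![0,1] := by
    rw [mul_assoc, hvu, mul_sub, mul_smul_comm, mul_one, huuv]
  have hvuv : ι Q ![0,1] * (ι Q ![1,0] * ι Q ![0,1]) =
      QuadraticMap.polar Q ![1,0] ![0,1] • ι Q ![0,1] - Q ![0,1] • ι Q ![1,0] := by
    rw [← mul_assoc, hvu, sub_mul, smul_mul_assoc, one_mul, huvv]
  have huvuv : (ι Q ![1,0] * ι Q ![0,1]) * (ι Q ![1,0] * ι Q ![0,1]) =
      QuadraticMap.polar Q ![1,0] ![0,1] • (ι Q ![1,0] * ι Q ![0,1])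
        - (Q ![0,1] * Q ![1,0]) • (1 : CliffordAlgebra Q) := by
    rw [mul_assoc, hvuv, mul_sub, mul_smul_comm, mul_smul_comm, hu2, smul_smul]
  -- products of generators lie in `P`
  have hmulS : ∀ x ∈ ({1, ι Q ![1,0], ι Q ![0,1], ι Q ![1,0] * ι Q ![0,1]} :
      Set (CliffordAlgebra Q)), ∀ y ∈ ({1, ι Q ![1,0], ι Q ![0,1],
        ι Q ![1,0] * ι Q ![0,1]} : Set (CliffordAlgebra Q)), x * y ∈ P := by
    rintro x (rfl | rfl | rfl | rfl) y (rfl | rfl | rfl | rfl) <;>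
      (try simp only [one_mul, mul_one, hu2, hv2, hvu, huuv, huvv, huvu, hvuv, huvuv]) <;>
      first
        | exact h1
        | exact hu'
        | exact hv'
        | exact hk'
        | exact P.smul_mem _ h1
        | exact P.smul_mem _ hu'
        | exact P.smul_mem _ hv'
        | exact P.smul_mem _ hk'
        | exact P.sub_mem (P.smul_mem _ h1) hk'
        | exact P.sub_mem (P.smul_mem _ hu') (P.smul_mem _ hv')
        | exact P.sub_mem (P.smul_mem _ hv') (P.smul_mem _ hu')
        | exact P.sub_mem (P.smul_mem _ hk') (P.smul_mem _ h1)
  -- `P` is closed under multiplication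
  have hmul : ∀ x ∈ P, ∀ y ∈ P, x * y ∈ P := by
    intro x hx
    induction hx using Submodule.span_induction with
    | mem x hxS =>
        intro y hy
        induction hy using Submodule.span_induction with
        | mem y hyS => exact hmulS x hxS y hyS
        | zero => rw [mul_zero]; exact P.zero_mem
        | add y z _ _ hy hz => rw [mul_add]; exact P.add_mem hy hz
        | smul r y _ hy => rw [mul_smul_comm]; exact P.smul_mem _ hy
    | zero => intro y hy; rw [zero_mul]; exact P.zero_mem
    | add x z _ _ hx hz => intro y hy; rw [add_mul]; exact P.add_mem (hx y hy) (hz y hy)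
    | smul r x _ hx => intro y hy; rw [smul_mul_assoc]; exact P.smul_mem _ (hx y hy)
  rw [eq_top_iff]
  rintro x -
  induction x using CliffordAlgebra.induction with
  | algebraMap r => rw [Algebra.algebraMap_eq_smul_one]; exact P.smul_mem _ h1
  | ι m =>
      have hm : ι Q m = m 0 • ι Q ![1,0] + m 1 • ι Q ![0,1] := by
        rw [← map_smul, ← map_smul, ← map_add]
        congr 1
        funext i; fin_cases i <;> simp
      rw [hm]; exact P.add_mem (P.smul_mem _ hu') (P.smul_mem _ hv')
  | mul a b ha hb => exact hmul a ha b hb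
  | add a b ha hb => exact P.add_mem ha hb

end Aux

/-- Let `R` be a commutative ring in which 2 is invertible and `Q` a
quadratic form on `Fin 2 → R`. Then the `R`-linear dual of the Clifford algebra `Cl(Q)`
is isomorphic to `Cl(Q)` as a left and as a right `Cl(Q)`-module: there is a linear
functional `ξ` such that `a ↦ (x ↦ ξ (x * a))` and `a ↦ (x ↦ ξ (a * x))` are bijective. -/
theorem stmt0 (R : Type*) [CommRing R] [Invertible (2 : R)]
    (Q : QuadraticForm R (Fin 2 → R)) :
    ∃ ξ : CliffordAlgebra Q →ₗ[R] R,
      Function.Bijective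
        (fun a : CliffordAlgebra Q => ξ ∘ₗ LinearMap.mulRight R a) ∧
      Function.Bijective
        (fun a : CliffordAlgebra Q => ξ ∘ₗ LinearMap.mulLeft R a) := by
  refine ⟨stmt0xi Q, ?_, ?_⟩
  · -- right multiplication
    have hleft : stmt0PsiR Q ∘ₗ stmt0PhiR Q = LinearMap.id := by
      refine LinearMap.ext_on (stmt0span Q) ?_
      rintro x (rfl | rfl | rfl | rfl) <;>
        · simp only [LinearMap.comp_apply, LinearMap.id_apply, stmt0PsiR_apply,
            stmt0PhiR_apply, one_mul, mul_one, xi_one, xi_u, xi_v, xi_k, xi_uu, xi_vu,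
            xi_vv, xi_uk, xi_vk, xi_ku, xi_kv, xi_kk]
          module
    have hright : ∀ f, stmt0PhiR Q (stmt0PsiR Q f) = f := by
      intro f
      refine LinearMap.ext_on (stmt0span Q) ?_
      rintro x (rfl | rfl | rfl | rfl) <;>
        · simp only [stmt0PhiR_apply, stmt0PsiR_apply, mul_add, mul_sub, mul_smul_comm,
            mul_one, one_mul, map_add, map_sub, map_smul, smul_eq_mul,
            LinearMap.add_apply, LinearMap.sub_apply, LinearMap.smul_apply,
            xi_one, xi_u,
            xi_v, xi_k, xi_uu, xi_vu, xi_vv, xi_uk, xi_vk, xi_ku, xi_kv, xi_kk]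
          ring
    exact Function.bijective_iff_has_inverse.mpr
      ⟨stmt0PsiR Q, fun a => LinearMap.congr_fun hleft a, fun f => hright f⟩
  · -- left multiplication
    have hleft : stmt0PsiL Q ∘ₗ stmt0PhiL Q = LinearMap.id := by
      refine LinearMap.ext_on (stmt0span Q) ?_
      rintro x (rfl | rfl | rfl | rfl) <;>
        · simp only [LinearMap.comp_apply, LinearMap.id_apply, stmt0PsiL_apply,
            stmt0PhiL_apply, one_mul, mul_one, xi_one, xi_u, xi_v, xi_k, xi_uu, xi_vu,
            xi_vv, xi_uk, xi_vk, xi_ku, xi_kv, xi_kk]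
          module
    have hright : ∀ f, stmt0PhiL Q (stmt0PsiL Q f) = f := by
      intro f
      refine LinearMap.ext_on (stmt0span Q) ?_
      rintro x (rfl | rfl | rfl | rfl) <;>
        · simp only [stmt0PhiL_apply, stmt0PsiL_apply, add_mul, sub_mul, smul_mul_assoc,
            mul_one, one_mul, map_add, map_sub, map_smul, smul_eq_mul,
            LinearMap.add_apply, LinearMap.sub_apply, LinearMap.smul_apply,
            xi_one, xi_u,
            xi_v, xi_k, xi_uu, xi_vu, xi_vv, xi_uk, xi_vk, xi_ku, xi_kv, xi_kk]
          ring
    exact Function.bijective_iff_has_inverse.mpr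
      ⟨stmt0PsiL Q, fun a => LinearMap.congr_fun hleft a, fun f => hright f⟩
end

section
/- Let R be a nontrivial commutative ring in which 2 is invertible, M a free R-module of finite rank n ≥ 1, and Q a quadratic form on M. Then the even Clifford algebra Cl₀(Q) is a free R-module of rank 2^(n−1). -/
/-! With `2` invertible, `changeForm` identifies `Cl(Q)` and `Cl(Q')` as modules for any two forms
on `M`, compatibly with the parity grading (it is built from left multiplications by vectors and
contractions, both of which flip parity). Writing `M ≅ Rᵐ × R`, the even algebra of `Q` is
therefore isomorphic as a module to that of `0 ⊕ ⟨-1⟩` (`EquivEven.Q'`), which is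
`Cl(0) = ⋀ Rᵐ` by `equivEven`: free with a basis indexed by the subsets of `Fin m`. -/

open CliffordAlgebra

namespace CliffordAlgebra

variable {R M : Type*} [CommRing R] [AddCommGroup M] [Module R M]

section Parity

variable {Q Q' : QuadraticForm R M}

theorem evenOdd_le_comap_of_pow_le {N : Type*} [AddCommGroup N] [Module R N]
    (f : CliffordAlgebra Q →ₗ[R] N) (p : ZMod 2 → Submodule R N)
    (h : ∀ k : ℕ, LinearMap.range (ι Q) ^ k ≤ (p k).comap f) (i : ZMod 2) :
    evenOdd Q i ≤ (p i).comap f :=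
  iSup_le fun ⟨k, hk⟩ => hk ▸ h k

theorem contractLeft_mem_evenOdd (d : Module.Dual R M) {i : ZMod 2} {x : CliffordAlgebra Q}
    (hx : x ∈ evenOdd Q i) : contractLeft d x ∈ evenOdd Q (i + 1) := by
  refine evenOdd_le_comap_of_pow_le (contractLeft d) (fun j => evenOdd Q (j + 1))
    (fun k y hy => ?_) i hx
  induction hy using Submodule.pow_induction_on_left' with
  | algebraMap r => simp [contractLeft_algebraMap]
  | add y z _ _ _ hy hz => exact add_mem hy hz
  | mem_mul m hm k y hy ih =>
    obtain ⟨v, rfl⟩ := hm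
    have hy' : y ∈ evenOdd Q (k : ZMod 2) := Submodule.mem_iSup_of_mem ⟨k, rfl⟩ hy
    rw [Submodule.mem_comap, contractLeft_ι_mul, Nat.cast_succ, CharTwo.add_cancel_right]
    refine sub_mem (Submodule.smul_mem _ _ hy') ?_
    have := SetLike.mul_mem_graded (ι_mem_evenOdd_one Q v) ih
    rwa [add_comm, CharTwo.add_cancel_right] at this

theorem changeForm_mem_evenOdd {B : LinearMap.BilinForm R M} (h : B.toQuadraticMap = Q' - Q)
    {i : ZMod 2} {x : CliffordAlgebra Q} (hx : x ∈ evenOdd Q i) :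
    changeForm h x ∈ evenOdd Q' i := by
  refine evenOdd_le_comap_of_pow_le (changeForm h) (evenOdd Q') (fun k y hy => ?_) i hx
  induction hy using Submodule.pow_induction_on_left' with
  | algebraMap r =>
    rw [Submodule.mem_comap, changeForm_algebraMap, Nat.cast_zero]
    exact SetLike.algebraMap_mem_graded _ r
  | add y z _ _ _ hy hz => exact add_mem hy hz
  | mem_mul m hm k y hy ih =>
    obtain ⟨v, rfl⟩ := hm
    rw [Submodule.mem_comap, changeForm_ι_mul, Nat.cast_succ]
    refine sub_mem ?_ (contractLeft_mem_evenOdd _ ih)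
    simpa [add_comm] using SetLike.mul_mem_graded (ι_mem_evenOdd_one Q' v) ih

theorem evenOdd_map_changeFormEquiv {B : LinearMap.BilinForm R M}
    (h : B.toQuadraticMap = Q' - Q) (i : ZMod 2) :
    (evenOdd Q i).map (changeFormEquiv h : CliffordAlgebra Q →ₗ[R] CliffordAlgebra Q') =
      evenOdd Q' i := by
  refine le_antisymm (Submodule.map_le_iff_le_comap.mpr fun x hx => changeForm_mem_evenOdd h hx) ?_
  rw [Submodule.map_equiv_eq_comap_symm, changeFormEquiv_symm]
  exact fun x hx => changeForm_mem_evenOdd (changeForm.neg_proof h) hx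

end Parity

variable {M₁ M₂ : Type*} [AddCommGroup M₁] [AddCommGroup M₂] [Module R M₁] [Module R M₂]
  {Q₁ : QuadraticForm R M₁} {Q₂ : QuadraticForm R M₂}

theorem evenOdd_map_map (f : Q₁ →qᵢ Q₂) (hf : Function.Surjective f) (i : ZMod 2) :
    (evenOdd Q₁ i).map (map f).toLinearMap = evenOdd Q₂ i := by
  simp_rw [evenOdd, Submodule.map_iSup, Submodule.map_pow, ← LinearMap.range_comp, map_comp_ι,
    LinearMap.range_comp, LinearMap.range_eq_top.mpr hf, Submodule.map_top]

def evenEquivOfMapEvenOdd (e : CliffordAlgebra Q₁ ≃ₗ[R] CliffordAlgebra Q₂)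
    (h : (evenOdd Q₁ 0).map (e : CliffordAlgebra Q₁ →ₗ[R] CliffordAlgebra Q₂) = evenOdd Q₂ 0) :
    even Q₁ ≃ₗ[R] even Q₂ :=
  e.ofSubmodules (even Q₁).toSubmodule (even Q₂).toSubmodule
    (by rwa [even_toSubmodule, even_toSubmodule])

def evenEquivOfIsometryEquiv (e : Q₁.IsometryEquiv Q₂) : even Q₁ ≃ₗ[R] even Q₂ :=
  evenEquivOfMapEvenOdd (equivOfIsometry e).toLinearEquiv
    (evenOdd_map_map e.toIsometry e.toLinearEquiv.surjective 0)

def evenEquivOfChangeForm [Invertible (2 : R)] (Q Q' : QuadraticForm R M) :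
    even Q ≃ₗ[R] even Q' :=
  evenEquivOfMapEvenOdd _ (evenOdd_map_changeFormEquiv
    (QuadraticMap.toQuadraticMap_associated R (Q' - Q)) 0)

def evenEquivOfLinearEquivProd [Invertible (2 : R)] (Q : QuadraticForm R M)
    (g : M ≃ₗ[R] M₁ × R) (Q₁ : QuadraticForm R M₁) :
    even Q ≃ₗ[R] CliffordAlgebra Q₁ :=
  evenEquivOfIsometryEquiv (Q.isometryEquivOfCompLinearEquiv g.symm) ≪≫ₗ
    evenEquivOfChangeForm _ (EquivEven.Q' Q₁) ≪≫ₗ (equivEven Q₁).symm.toLinearEquiv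

end CliffordAlgebra

/-- Over a nontrivial commutative ring with 2 invertible, the even
Clifford algebra of a quadratic form on a free module of finite rank `n ≥ 1` is a
free module of rank `2 ^ (n - 1)`. -/
theorem stmt2 (R M : Type*) [CommRing R] [Nontrivial R] [Invertible (2 : R)]
    [AddCommGroup M] [Module R M] [Module.Free R M] [Module.Finite R M]
    (n : ℕ) (hn : 1 ≤ n) (hrank : Module.finrank R M = n)
    (Q : QuadraticForm R M) :
    Module.Free R (CliffordAlgebra.even Q) ∧
      Module.rank R (CliffordAlgebra.even Q) = 2 ^ (n - 1) := by
  obtain ⟨m, rfl⟩ : ∃ m, n = m + 1 := ⟨n - 1, by omega⟩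
  let g : M ≃ₗ[R] (Fin m → R) × R := (Module.finBasisOfFinrankEq R M hrank).equivFun ≪≫ₗ
    (Fin.consLinearEquiv R fun _ => R).symm ≪≫ₗ LinearEquiv.prodComm R R _
  let b : Module.Basis (Finset (Fin m)) R (even Q) := (Pi.basisFun R (Fin m)).ExteriorAlgebra.map
    (evenEquivOfLinearEquivProd Q g 0).symm
  refine ⟨.of_basis b, ?_⟩
  rw [rank_eq_card_basis b]
  simp
end

section
/- Let R be an integral domain in which 2 is invertible and let A be an R-algebra that is free of rank 4 as an R-module. Then the following are equivalent: (a) there exists an R-linear map tr : A → R with tr(r·1) = 2r for all r ∈ R and such that every a ∈ A satisfies a·a − tr(a)·a + g·1 = 0 for some g ∈ R; (b) there exists an R-submodule S ⊆ A such that A is the internal direct sum of R·1 and S as R-modules and x·x ∈ R·1 for every x ∈ S. -/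
/-!
Both conditions amount to an `R`-linear retraction `c : A → R` of the unit map `r ↦ r • 1`:
from a trace take `c = tr / 2` and `S = ker tr`; from `S` take for `c` the projection onto
`R • 1 ≅ R` along `S`, and `tr = 2c` (here freeness of positive rank makes `R → A` injective).
Completing the square, `a * a - (2 * c a) • a = s * s - (c a)²` with `s = a - c a • 1 ∈ ker c`,
so the quadratic relations for all `a ∈ A` are the same as `s * s ∈ R • 1` for all `s ∈ ker c`.
-/

open Submodule LinearMap

theorem LinearMap.isCompl_range_ker_of_leftInverse {R E F : Type*} [Ring R]
    [AddCommGroup E] [Module R E] [AddCommGroup F] [Module R F]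
    {i : F →ₗ[R] E} {c : E →ₗ[R] F} (h : ∀ x, c (i x) = x) :
    IsCompl (range i) (ker c) := by
  constructor
  · rw [disjoint_def]
    rintro _ ⟨x, rfl⟩ hx
    rw [mem_ker, h] at hx
    rw [hx, map_zero]
  · rw [codisjoint_iff_le_sup]
    intro y _
    rw [← add_sub_cancel (i (c y)) y]
    exact add_mem_sup (mem_range_self i _) (by simp [h])

section

variable {R A : Type*} [CommRing R] [Ring A] [Algebra R A]

theorem Submodule.isCompl_one_ker_of_retraction {c : A →ₗ[R] R}
    (hc : ∀ r, c (algebraMap R A r) = r) : IsCompl (1 : Submodule R A) (ker c) := by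
  rw [one_eq_range]
  exact isCompl_range_ker_of_leftInverse hc

theorem Submodule.exists_retraction_of_isCompl_one [FaithfulSMul R A] {S : Submodule R A}
    (hS : IsCompl 1 S) : ∃ c : A →ₗ[R] R, (∀ r, c (algebraMap R A r) = r) ∧ ker c = S :=
  have hS' : IsCompl (range (Algebra.linearMap R A)) S := one_eq_range (R := R) (A := A) ▸ hS
  ⟨LinearMap.linearProjOfIsCompl S _ (FaithfulSMul.algebraMap_injective R A) hS',
    LinearMap.linearProjOfIsCompl_apply_left _ _ _ hS',
    LinearMap.ker_linearProjOfIsCompl _ _ _ hS'⟩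

theorem mul_self_sub_two_mul_smul_eq (a : A) (r : R) :
    a * a - (2 * r) • a
      = (a - algebraMap R A r) * (a - algebraMap R A r) - algebraMap R A (r * r) := by
  rw [mul_smul, two_smul, Algebra.smul_def, map_mul, sub_mul, mul_sub, mul_sub,
    ← Algebra.commutes r a]
  abel

end

theorem stmt3_general (R A : Type*) [CommRing R] [Invertible (2 : R)]
    [Ring A] [Algebra R A] [Module.Free R A] (hrank : Module.finrank R A = 4) :
    (∃ tr : A →ₗ[R] R,
        (∀ r : R, tr (algebraMap R A r) = 2 * r) ∧
        ∀ a : A, ∃ g : R, a * a - tr a • a + algebraMap R A g = 0) ↔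
    (∃ S : Submodule R A,
        IsCompl (1 : Submodule R A) S ∧
        ∀ x ∈ S, x * x ∈ (1 : Submodule R A)) := by
  constructor
  · rintro ⟨tr, htr, hquad⟩
    have hker : ker (⅟(2 : R) • tr) = ker tr := by
      ext x
      exact (isUnit_of_invertible _).mul_right_eq_zero
    refine ⟨ker tr, hker ▸ isCompl_one_ker_of_retraction fun r => ?_, fun x hx => ?_⟩
    · simp [htr]
    · obtain ⟨g, hg⟩ := hquad x
      rw [mem_ker.1 hx, zero_smul, sub_zero, ← eq_neg_iff_add_eq_zero] at hg
      exact mem_one.2 ⟨-g, by rw [map_neg, hg]⟩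
  · rintro ⟨S, hS, hsq⟩
    have : Nontrivial R := not_subsingleton_iff_nontrivial.1 fun _ => by simp at hrank
    have : Nontrivial A := Module.nontrivial_of_finrank_eq_succ (R := R) hrank
    obtain ⟨c, hc, rfl⟩ := exists_retraction_of_isCompl_one hS
    refine ⟨2 • c, fun r => by simp [hc, two_mul], fun a => ?_⟩
    obtain ⟨t, ht⟩ := mem_one.1 (hsq (a - algebraMap R A (c a)) (by simp [hc]))
    refine ⟨c a * c a - t, ?_⟩
    rw [LinearMap.smul_apply, two_nsmul, ← two_mul, mul_self_sub_two_mul_smul_eq, ← ht, map_sub]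
    abel

/-- For an algebra `A` free of rank 4 over a domain `R` with 2
invertible, the existence of a trace map (with `tr (r·1) = 2r` and every element
satisfying a monic quadratic relation `a² - tr(a)·a + g = 0`) is equivalent to the
existence of a quaternion structure: a submodule `S` with `A = R·1 ⊕ S` internally
and `x² ∈ R·1` for all `x ∈ S`. -/
theorem stmt3 (R A : Type*) [CommRing R] [IsDomain R] [Invertible (2 : R)]
    [Ring A] [Algebra R A] [Module.Free R A] (hrank : Module.finrank R A = 4) :
    (∃ tr : A →ₗ[R] R,
        (∀ r : R, tr (algebraMap R A r) = 2 * r) ∧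
        ∀ a : A, ∃ g : R, a * a - tr a • a + algebraMap R A g = 0) ↔
    (∃ S : Submodule R A,
        IsCompl (1 : Submodule R A) S ∧
        ∀ x ∈ S, x * x ∈ (1 : Submodule R A)) :=
  stmt3_general R A hrank
end

section
/- Let R be an integral domain in which 2 is invertible and let A be an R-algebra, free of rank 4 as an R-module, with a quaternion structure given by a submodule S (so A = R·1 ⊕ S internally and x·x ∈ R·1 for all x ∈ S). Then the set { a ∈ A : a·a ∈ R·1 } equals the union of R·1 and S. Consequently the submodule S is uniquely determined: if S' is another submodule with A = R·1 ⊕ S' and x·x ∈ R·1 for all x ∈ S', then S' = S. -/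
/-!
Write `a = r + v` with `r ∈ R·1` and `v ∈ S`. Then `a² = r² + 2rv + v²` with `r², v² ∈ R·1`, so
`a² ∈ R·1` forces `2rv ∈ R·1 ∩ S = 0`; since `A` is torsion-free and `2 ≠ 0`, either `r = 0` or
`v = 0`. Uniqueness follows: a second quaternion structure `S'` lies in `R·1 ∪ S`, hence in one of
the two submodules, hence in `S` (it meets `R·1` trivially), and two comparable complements of
`R·1` coincide by modularity.
-/

theorem IsCompl.eq_of_le {α : Type*} [Lattice α] [BoundedOrder α] [IsModularLattice α]
    {p q q' : α} (h : IsCompl p q) (h' : IsCompl p q') (hle : q ≤ q') : q = q' :=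
  eq_of_le_of_inf_le_of_sup_le (z := p) hle (h'.symm.inf_eq_bot ▸ bot_le)
    (h.symm.sup_eq_top ▸ le_top)

namespace Submodule

variable {R A : Type*} [CommRing R] [Ring A] [Algebra R A]

theorem mul_self_mem_one_of_mem_one {x : A} (hx : x ∈ (1 : Submodule R A)) :
    x * x ∈ (1 : Submodule R A) := by
  simpa using mul_mem_mul hx hx

theorem algebraMap_add_mul_self (r : R) (v : A) :
    (algebraMap R A r + v) * (algebraMap R A r + v)
      = algebraMap R A (r * r) + (2 * r) • v + v * v := by
  rw [add_mul, mul_add, mul_add, ← map_mul, ← Algebra.commutes r v, ← Algebra.smul_def,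
    mul_smul, two_smul]
  abel

theorem mem_one_or_mem_of_mul_self_mem_one [IsDomain R] [Module.IsTorsionFree R A]
    (h2 : (2 : R) ≠ 0) {S : Submodule R A} (hcompl : IsCompl 1 S)
    (hsq : ∀ x ∈ S, x * x ∈ (1 : Submodule R A)) {a : A} (ha : a * a ∈ (1 : Submodule R A)) :
    a ∈ (1 : Submodule R A) ∨ a ∈ S := by
  obtain ⟨u, v, hu, hv, rfl⟩ := codisjoint_iff_exists_add_eq.mp hcompl.codisjoint a
  obtain ⟨r, rfl⟩ := mem_one.mp hu
  have hcross : (2 * r) • v ∈ (1 : Submodule R A) := by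
    have hsplit : (2 * r) • v = (algebraMap R A r + v) * (algebraMap R A r + v)
        - algebraMap R A (r * r) - v * v := by
      rw [algebraMap_add_mul_self]; abel
    rw [hsplit]
    exact sub_mem (sub_mem ha (algebraMap_mem _)) (hsq v hv)
  have hzero : (2 * r) • v = 0 := disjoint_def.mp hcompl.disjoint _ hcross (S.smul_mem _ hv)
  rcases smul_eq_zero.mp hzero with hr | rfl
  · obtain rfl : r = 0 := (mul_eq_zero.mp hr).resolve_left h2
    simp [hv]
  · simp [hu]

theorem mul_self_mem_one_iff [IsDomain R] [Module.IsTorsionFree R A]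
    (h2 : (2 : R) ≠ 0) {S : Submodule R A} (hcompl : IsCompl 1 S)
    (hsq : ∀ x ∈ S, x * x ∈ (1 : Submodule R A)) {a : A} :
    a * a ∈ (1 : Submodule R A) ↔ a ∈ (1 : Submodule R A) ∨ a ∈ S :=
  ⟨mem_one_or_mem_of_mul_self_mem_one h2 hcompl hsq,
    fun h ↦ h.elim mul_self_mem_one_of_mem_one (hsq a)⟩

end Submodule

open Submodule in
theorem stmt5_general (R A : Type*) [CommRing R] [IsDomain R] [Invertible (2 : R)]
    [Ring A] [Algebra R A] [Module.Free R A]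
    (S : Submodule R A)
    (hcompl : IsCompl (1 : Submodule R A) S)
    (hsq : ∀ x ∈ S, x * x ∈ (1 : Submodule R A)) :
    ({a : A | a * a ∈ (1 : Submodule R A)}
        = ((1 : Submodule R A) : Set A) ∪ (S : Set A)) ∧
    ∀ S' : Submodule R A,
      IsCompl (1 : Submodule R A) S' →
      (∀ x ∈ S', x * x ∈ (1 : Submodule R A)) → S' = S := by
  have h2 : (2 : R) ≠ 0 := Invertible.ne_zero 2
  refine ⟨Set.ext fun a ↦ mul_self_mem_one_iff h2 hcompl hsq, fun S' hcompl' hsq' ↦ ?_⟩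
  have hsub : (S' : Set A) ⊆ (1 : Submodule R A) ∪ S :=
    fun x hx ↦ mem_one_or_mem_of_mul_self_mem_one h2 hcompl hsq (hsq' x hx)
  refine hcompl'.eq_of_le hcompl ?_
  rcases AddSubgroupClass.subset_union.mp hsub with hone | hS
  · simp [hcompl'.disjoint.eq_bot_of_ge hone]
  · exact hS

/-- For a quaternion structure `S` on an algebra `A` free of rank 4
over a domain `R` with 2 invertible, the set `{a | a² ∈ R·1}` is exactly `R·1 ∪ S`;
consequently the trace-zero part `S` is uniquely determined. -/
theorem stmt5 (R A : Type*) [CommRing R] [IsDomain R] [Invertible (2 : R)]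
    [Ring A] [Algebra R A] [Module.Free R A] (hrank : Module.finrank R A = 4)
    (S : Submodule R A)
    (hcompl : IsCompl (1 : Submodule R A) S)
    (hsq : ∀ x ∈ S, x * x ∈ (1 : Submodule R A)) :
    ({a : A | a * a ∈ (1 : Submodule R A)}
        = ((1 : Submodule R A) : Set A) ∪ (S : Set A)) ∧
    ∀ S' : Submodule R A,
      IsCompl (1 : Submodule R A) S' →
      (∀ x ∈ S', x * x ∈ (1 : Submodule R A)) → S' = S :=
  stmt5_general R A S hcompl hsq
end

section
/- Let k be an algebraically closed field of characteristic different from 2, and let A be a 4-dimensional k-algebra with a quaternion structure: a k-subspace S ⊆ A such that A is the internal direct sum of k·1 and S and x·x ∈ k·1 for every x ∈ S. Then at least one of the following holds: (i) there is a quadratic form Q on k² (on Fin 2 → k) with A isomorphic as a k-algebra to the Clifford algebra Cl(Q); (ii) A is isomorphic as a k-algebra to the trivial square-zero extension of k by the 3-dimensional k-vector space k³ (that is, to k[x,y,z]/(x,y,z)²); (iii) A is isomorphic as a k-algebra to the Kronecker algebra. -/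
/-- The Kronecker algebra over a field `k`: the 4-dimensional subalgebra of `3 × 3`
matrices consisting of matrices `N` with `N 1 0 = N 2 0 = N 2 1 = N 1 2 = 0` and
`N 1 1 = N 2 2`; it is the path algebra of the Kronecker quiver with two arrows. -/
def kroneckerAlgebra (k : Type*) [Field k] :
    Subalgebra k (Matrix (Fin 3) (Fin 3) k) where
  carrier := {N | N 1 0 = 0 ∧ N 2 0 = 0 ∧ N 2 1 = 0 ∧ N 1 2 = 0 ∧ N 1 1 = N 2 2}
  add_mem' := by
    rintro a b ⟨ha1, ha2, ha3, ha4, ha5⟩ ⟨hb1, hb2, hb3, hb4, hb5⟩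
    simp_all [Matrix.add_apply]
  mul_mem' := by
    rintro a b ⟨ha1, ha2, ha3, ha4, ha5⟩ ⟨hb1, hb2, hb3, hb4, hb5⟩
    simp_all [Matrix.mul_apply, Fin.sum_univ_three]
  zero_mem' := by simp
  one_mem' := by simp [Matrix.one_apply]
  algebraMap_mem' := fun r => by simp [Matrix.algebraMap_matrix_apply]

/-!
In a quaternion structure `A = k ⊕ S`, squares and anticommutators of elements of `S` are
scalars. If some `x, y ∈ S` have `x * y ∉ span {1, x, y}`, then `1, x, y, x * y` is a basis
of `A`, and the Clifford algebra of the binary form `v ↦ (v₀ x + v₁ y)²`, which is spanned by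
four elements, maps onto `A`, hence isomorphically.

Otherwise left multiplication by `x ∈ S` acts on `A ⧸ span {1, x}` with every vector as an
eigenvector, hence as a scalar `φ x`; comparing coefficients gives
`x * y = φ x * φ y + φ x • y - φ y • x` on `S`, with `φ` linear. If `φ = 0` then
`S * S = 0` and `A ≅ k ⋉ S`. Otherwise pick `D ∈ S` with `φ D = 1`: then `e = (1 + D) / 2`
is idempotent, and a basis `a, b` of `ker φ` satisfies `e a = a`, `a e = 0`, `e b = b`,
`b e = 0`, which is the presentation of the Kronecker algebra as a path algebra.
-/

open Module Submodule CliffordAlgebra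

namespace LinearIndependent

variable {R M : Type*} [Ring R] [AddCommGroup M] [Module R M]

lemma eq_zero_of_triple {x y z : M} (h : LinearIndependent R ![x, y, z]) {a b c : R}
    (habc : a • x + b • y + c • z = 0) : a = 0 ∧ b = 0 ∧ c = 0 := by
  have := Fintype.linearIndependent_iff.mp h ![a, b, c] (by simpa [Fin.sum_univ_three] using habc)
  exact ⟨this 0, this 1, this 2⟩

end LinearIndependent

lemma Module.Basis.linearIndependent_pair_of_ne {ι R M : Type*} [Ring R] [AddCommGroup M]
    [Module R M] (b : Basis ι R M) {i j : ι} (hij : i ≠ j) :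
    LinearIndependent R ![b i, b j] := by
  refine LinearIndependent.pair_iff.mpr fun s t h => ⟨?_, ?_⟩
  · simpa [Finsupp.single_apply, hij.symm] using congrArg (fun v => b.repr v i) h
  · simpa [Finsupp.single_apply, hij] using congrArg (fun v => b.repr v j) h

section Algebra

variable {k A : Type*} [Field k] [Ring A] [Algebra k A]

lemma exists_eq_smul_one_of_mem_one {x : A} (hx : x ∈ (1 : Submodule k A)) :
    ∃ c : k, x = c • 1 := by
  obtain ⟨c, rfl⟩ := Submodule.mem_one.mp hx
  exact ⟨c, Algebra.algebraMap_eq_smul_one c⟩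

lemma one_le_span_one_insert (s : Set A) : (1 : Submodule k A) ≤ span k (insert 1 s) := by
  rw [Submodule.one_eq_span]
  exact span_mono (Set.singleton_subset_iff.mpr (Set.mem_insert _ _))

lemma mul_mem_span_one_pair {x : A} (hxx : x * x ∈ (1 : Submodule k A)) {w : A}
    (hw : w ∈ span k {(1 : A), x}) : x * w ∈ span k {(1 : A), x} := by
  obtain ⟨a, b, rfl⟩ := mem_span_pair.mp hw
  rw [mul_add, mul_smul_comm, mul_smul_comm, mul_one]
  exact add_mem (smul_mem _ _ (subset_span (by simp)))
    (smul_mem _ _ (one_le_span_one_insert _ hxx))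

lemma sq_eq_of_mul_sub_smul_mem_span {x : A} {q c : k} (hxx : x * x = q • 1)
    (hc : ∀ z, x * z - c • z ∈ span k {(1 : A), x}) (hW : span k {(1 : A), x} ≠ ⊤) :
    q = c * c := by
  by_contra hne
  refine hW (eq_top_iff.mpr fun z _ => ?_)
  have hxx' : x * x ∈ (1 : Submodule k A) := hxx ▸ smul_mem _ _ (one_le.mp le_rfl)
  have hz : (q - c * c) • z = x * (x * z - c • z) + c • (x * z - c • z) := by
    rw [mul_sub, ← mul_assoc, hxx, smul_mul_assoc, one_mul, mul_smul_comm]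
    module
  rw [← smul_mem_iff _ (sub_ne_zero.mpr hne), hz]
  exact add_mem (mul_mem_span_one_pair hxx' (hc z)) (smul_mem _ _ (hc z))

lemma mul_eq_of_mul_sub_smul_mem_span {x y : A} {cx cy : k}
    (hx : ∀ z, x * z - cx • z ∈ span k {(1 : A), x})
    (hy : ∀ z, y * z - cy • z ∈ span k {(1 : A), y}) (hxx : x * x = (cx * cx) • 1)
    (hxy : x * y + y * x ∈ (1 : Submodule k A)) (hli : LinearIndependent k ![1, x, y]) :
    x * y = (cx * cy) • 1 + cx • y - cy • x := by
  obtain ⟨a, b, hab⟩ := mem_span_pair.mp (hx y)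
  obtain ⟨a', b', hab'⟩ := mem_span_pair.mp (hy x)
  obtain ⟨t, ht⟩ := exists_eq_smul_one_of_mem_one hxy
  have hxy' : x * y = a • 1 + b • x + cx • y := by rw [hab]; abel
  have hyx' : y * x = a' • 1 + b' • y + cy • x := by rw [hab']; abel
  -- the anticommutator forces `b = -cy`, and `x * (x * y) = cx² • y` then forces `a = -cx * b`
  obtain ⟨-, hb, -⟩ := hli.eq_zero_of_triple (a := a + a' - t) (b := b + cy) (c := cx + b')
    (by linear_combination (norm := module) ht - hxy' - hyx')
  have hxxy : x * (x * y) = (cx * cx) • y := by rw [← mul_assoc, hxx, smul_mul_assoc, one_mul]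
  rw [hxy', mul_add, mul_add, mul_smul_comm, mul_smul_comm, mul_smul_comm, mul_one, hxx,
    hxy'] at hxxy
  obtain ⟨-, ha, -⟩ := hli.eq_zero_of_triple (a := b * (cx * cx) + cx * a) (b := a + cx * b)
    (c := 0) (by linear_combination (norm := module) hxxy)
  rw [hxy', show a = cx * cy by linear_combination ha - cx * hb,
    show b = -cy by linear_combination hb]
  module

lemma mul_mem_span_one_mul_of_anticomm {x y : A} {a b p : k} (hxx : x * x = a • 1)
    (hyy : y * y = b • 1) (hxy : x * y + y * x = p • 1) {z : A}
    (hz : z ∈ span k (Set.range ![1, x, y, x * y])) :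
    x * z ∈ span k (Set.range ![1, x, y, x * y]) ∧
      y * z ∈ span k (Set.range ![1, x, y, x * y]) := by
  set T := span k (Set.range ![1, x, y, x * y])
  have mem (c₀ c₁ c₂ c₃ : k) : c₀ • 1 + c₁ • x + c₂ • y + c₃ • (x * y) ∈ T :=
    (mem_span_range_iff_exists_fun k).mpr
      ⟨![c₀, c₁, c₂, c₃], by simp [Fin.sum_univ_four]⟩
  have hyx : y * x = p • 1 - x * y := eq_sub_of_add_eq' hxy
  induction hz using span_induction with
  | mem z hz =>
    obtain ⟨i, rfl⟩ := hz
    fin_cases i <;> simp only [Fin.isValue, Matrix.cons_val, Fin.zero_eta, Fin.mk_one,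
      Fin.reduceFinMk] <;> constructor
    · simpa using mem 0 1 0 0
    · simpa using mem 0 0 1 0
    · simpa [hxx] using mem a 0 0 0
    · simpa [hyx, sub_eq_add_neg] using mem p 0 0 (-1)
    · simpa using mem 0 0 0 1
    · simpa [hyy] using mem b 0 0 0
    · simpa [← mul_assoc, hxx] using mem 0 0 a 0
    · convert mem 0 (-b) p 0 using 1
      rw [← mul_assoc, hyx, sub_mul, mul_assoc, hyy, smul_mul_assoc, one_mul, mul_smul_comm,
        mul_one]
      module
  | zero => simp
  | add z w _ _ hz hw => simpa [mul_add] using ⟨add_mem hz.1 hw.1, add_mem hz.2 hw.2⟩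
  | smul c z _ hz => simpa using ⟨smul_mem _ c hz.1, smul_mem _ c hz.2⟩

lemma CliffordAlgebra.span_range_one_ι_ι_mul_eq_top (Q : QuadraticForm k (Fin 2 → k)) :
    span k (Set.range ![1, ι Q (Pi.single 0 1), ι Q (Pi.single 1 1),
      ι Q (Pi.single 0 1) * ι Q (Pi.single 1 1)]) = ⊤ := by
  set X := ι Q (Pi.single 0 1)
  set Y := ι Q (Pi.single 1 1)
  have hclosed {z} (hz : z ∈ span k (Set.range ![1, X, Y, X * Y])) :=
    mul_mem_span_one_mul_of_anticomm
    ((ι_sq_scalar Q _).trans (Algebra.algebraMap_eq_smul_one _) : X * X = _)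
    ((ι_sq_scalar Q _).trans (Algebra.algebraMap_eq_smul_one _) : Y * Y = _)
    ((ι_mul_ι_add_swap _ _).trans (Algebra.algebraMap_eq_smul_one _) : X * Y + Y * X = _) hz
  rw [eq_top_iff]
  rintro z -
  induction z using CliffordAlgebra.left_induction with
  | algebraMap r =>
    rw [Algebra.algebraMap_eq_smul_one]
    exact smul_mem _ _ (subset_span ⟨0, rfl⟩)
  | add z w hz hw => exact add_mem hz hw
  | ι_mul z m hz =>
    have hm : ι Q m = m 0 • X + m 1 • Y := by
      rw [← map_smul, ← map_smul, ← map_add]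
      congr 1
      ext i; fin_cases i <;> simp
    rw [hm, add_mul, smul_mul_assoc, smul_mul_assoc]
    exact add_mem (smul_mem _ _ (hclosed hz).1) (smul_mem _ _ (hclosed hz).2)

lemma exists_algEquiv_cliffordAlgebra (hrank : finrank k A = 4) {x y : A} {a b p : k}
    (hxx : x * x = a • 1) (hyy : y * y = b • 1) (hxy : x * y + y * x = p • 1)
    (hli : LinearIndependent k ![1, x, y, x * y]) :
    ∃ Q : QuadraticForm k (Fin 2 → k), Nonempty (A ≃ₐ[k] CliffordAlgebra Q) := by
  have : FiniteDimensional k A := .of_finrank_eq_succ hrank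
  let Q : QuadraticForm k (Fin 2 → k) :=
    a • QuadraticMap.linMulLin (LinearMap.proj 0) (LinearMap.proj 0) +
    b • QuadraticMap.linMulLin (LinearMap.proj 1) (LinearMap.proj 1) +
    p • QuadraticMap.linMulLin (LinearMap.proj 0) (LinearMap.proj 1)
  let f : (Fin 2 → k) →ₗ[k] A := Fintype.linearCombination k ![x, y]
  have hf (v : Fin 2 → k) : f v * f v = algebraMap k A (Q v) := by
    have hyx : y * x = p • 1 - x * y := eq_sub_of_add_eq' hxy
    have hQ : Q v = a * (v 0 * v 0) + b * (v 1 * v 1) + p * (v 0 * v 1) := by simp [Q]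
    simp only [f, hQ, Fintype.linearCombination_apply, Fin.sum_univ_two, Matrix.cons_val_zero,
      Matrix.cons_val_one, add_mul, mul_add, smul_mul_assoc, mul_smul_comm, hxx, hyy, hyx,
      Algebra.algebraMap_eq_smul_one]
    module
  let F := CliffordAlgebra.lift Q ⟨f, hf⟩
  let V : Fin 4 → CliffordAlgebra Q :=
    ![1, ι Q (Pi.single 0 1), ι Q (Pi.single 1 1), ι Q (Pi.single 0 1) * ι Q (Pi.single 1 1)]
  have hV : span k (Set.range V) = ⊤ := span_range_one_ι_ι_mul_eq_top Q
  have hFV : F ∘ V = ![1, x, y, x * y] := by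
    ext i
    fin_cases i <;> simp [V, F, f]
  have hsurj : Function.Surjective F := by
    rw [← AlgHom.coe_toLinearMap, ← LinearMap.range_eq_top, LinearMap.range_eq_map, ← hV,
      map_span, ← Set.range_comp, AlgHom.coe_toLinearMap, hFV]
    exact hli.span_eq_top_of_card_eq_finrank (by simp [hrank])
  have : FiniteDimensional k (span k (Set.range V)) := .span_of_finite k (Set.finite_range V)
  have : FiniteDimensional k (CliffordAlgebra Q) := .equiv (LinearEquiv.ofTop _ hV)
  have hdim : finrank k (CliffordAlgebra Q) = finrank k A := by
    refine le_antisymm ?_ ?_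
    · have := finrank_range_le_card (R := k) V
      rw [Set.finrank, hV, finrank_top] at this
      simpa [hrank] using this
    · have := LinearMap.finrank_range_le F.toLinearMap
      rwa [LinearMap.range_eq_top.mpr hsurj, finrank_top] at this
  have hinj :=
    (LinearMap.injective_iff_surjective_of_finrank_eq_finrank hdim (f := F.toLinearMap)).mpr hsurj
  exact ⟨Q, ⟨(AlgEquiv.ofBijective F ⟨hinj, hsurj⟩).symm⟩⟩

lemma nonempty_algEquiv_kroneckerAlgebra (hrank : finrank k A = 4) {e a b : A}
    (he : e * e = e) (hea : e * a = a) (hae : a * e = 0) (heb : e * b = b) (hbe : b * e = 0)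
    (hspan : ⊤ ≤ span k (Set.range ![e, 1 - e, a, b])) :
    Nonempty (A ≃ₐ[k] kroneckerAlgebra k) := by
  have hab : a * b = 0 := by rw [← heb, ← mul_assoc, hae, zero_mul]
  have hba : b * a = 0 := by rw [← hea, ← mul_assoc, hbe, zero_mul]
  have haa : a * a = 0 := by nth_rw 2 [← hea]; rw [← mul_assoc, hae, zero_mul]
  have hbb : b * b = 0 := by nth_rw 2 [← heb]; rw [← mul_assoc, hbe, zero_mul]
  let G₀ : kroneckerAlgebra k →ₗ[k] A :=
    { toFun := fun N => N.1 0 0 • e + N.1 1 1 • (1 - e) + N.1 0 1 • a + N.1 0 2 • b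
      map_add' := fun N M => by simp only [Subalgebra.coe_add, Matrix.add_apply]; module
      map_smul' := fun r N => by
        simp only [Subalgebra.coe_smul, Matrix.smul_apply, smul_eq_mul, RingHom.id_apply]
        module }
  have hG₀ (N : kroneckerAlgebra k) :
      G₀ N = N.1 0 0 • e + N.1 1 1 • (1 - e) + N.1 0 1 • a + N.1 0 2 • b := rfl
  have hmul (N M : kroneckerAlgebra k) : G₀ (N * M) = G₀ N * G₀ M := by
    obtain ⟨N, hN10, hN20, hN21, hN12, hN11⟩ := N
    obtain ⟨M, hM10, hM20, hM21, hM12, hM11⟩ := M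
    simp only [hG₀, Subalgebra.coe_mul, Matrix.mul_apply, Fin.sum_univ_three, hN10, hN12, hM10,
      hM20, hM21, hM12, ← hM11, mul_add, add_mul, smul_mul_assoc, mul_smul_comm, mul_sub,
      sub_mul, one_mul, mul_one, he, hea, hae, heb, hbe, hab, hba, haa, hbb]
    module
  let G : kroneckerAlgebra k →ₐ[k] A :=
    AlgHom.ofLinearMap G₀ (by simp [hG₀]) hmul
  have hli := linearIndependent_of_top_le_span_of_card_eq_finrank hspan (by simp [hrank])
  refine ⟨(AlgEquiv.ofBijective G ⟨(injective_iff_map_eq_zero G).mpr fun N hN => ?_,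
    fun z => ?_⟩).symm⟩
  · obtain ⟨N, hN10, hN20, hN21, hN12, hN11⟩ := N
    replace hN : G₀ _ = 0 := hN
    have h0 := Fintype.linearIndependent_iff.mp hli ![N 0 0, N 1 1, N 0 1, N 0 2]
      (by simpa [Fin.sum_univ_four, hG₀] using hN)
    obtain ⟨h00, h11, h01, h02⟩ : N 0 0 = 0 ∧ N 1 1 = 0 ∧ N 0 1 = 0 ∧ N 0 2 = 0 :=
      ⟨h0 0, h0 1, h0 2, h0 3⟩
    ext i j
    fin_cases i <;> fin_cases j <;> simp_all
  · obtain ⟨c, hc⟩ := (mem_span_range_iff_exists_fun k).mp (hspan (mem_top (x := z)))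
    refine ⟨⟨!![c 0, c 2, c 3; 0, c 1, 0; 0, 0, c 1], rfl, rfl, rfl, rfl, rfl⟩, ?_⟩
    rw [← hc, Fin.sum_univ_four]
    rfl

variable {S : Submodule k A}

lemma exists_eq_smul_one_add_of_codisjoint (hcod : Codisjoint (1 : Submodule k A) S) (z : A) :
    ∃ r : k, ∃ s ∈ S, z = r • 1 + s := by
  obtain ⟨r, hr, s, hs, rfl⟩ :=
    mem_sup.mp (hcod.eq_top ▸ mem_top : z ∈ (1 : Submodule k A) ⊔ S)
  obtain ⟨r, rfl⟩ := exists_eq_smul_one_of_mem_one hr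
  exact ⟨r, s, hs, rfl⟩

lemma mul_add_mul_swap_mem_one (hsq : ∀ x ∈ S, x * x ∈ (1 : Submodule k A)) {x y : A}
    (hx : x ∈ S) (hy : y ∈ S) : x * y + y * x ∈ (1 : Submodule k A) := by
  convert sub_mem (sub_mem (hsq _ (add_mem hx hy)) (hsq x hx)) (hsq y hy) using 1
  noncomm_ring

lemma linearIndependent_one_pair (hdisj : Disjoint (1 : Submodule k A) S) {x y : A}
    (hx : x ∈ S) (hy : y ∈ S) (h : LinearIndependent k ![x, y]) :
    LinearIndependent k ![1, x, y] := by
  refine linearIndependent_finCons.mpr ⟨h, fun h1 => h.ne_zero 0 ?_⟩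
  have h1S : (1 : A) ∈ S := span_le.mpr (by simp [Set.insert_subset_iff, hx, hy]) h1
  have h10 : (1 : A) = 0 := disjoint_def.mp hdisj 1 (one_le.mp le_rfl) h1S
  simpa using congrArg (· * x) h10

lemma linearIndependent_one_mul_of_mul_notMem_span
    (hsq : ∀ x ∈ S, x * x ∈ (1 : Submodule k A)) (hdisj : Disjoint (1 : Submodule k A) S)
    {x y : A} (hx : x ∈ S) (hy : y ∈ S)
    (h : x * y ∉ span k {1, x, y}) : LinearIndependent k ![1, x, y, x * y] := by
  have hrange : Set.range ![1, x, y] = {1, x, y} := by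
    simp only [Matrix.range_cons, Matrix.range_empty, Set.union_empty, Set.singleton_union]
  have hsnoc : ![1, x, y, x * y] = Fin.snoc ![1, x, y] (x * y) := by
    ext i
    fin_cases i <;> rfl
  rw [hsnoc, linearIndependent_finSnoc, hrange]
  refine ⟨linearIndependent_one_pair hdisj hx hy
    (LinearIndependent.pair_iff.mpr fun s t hst => ?_), h⟩
  by_contra hne
  apply h
  rcases eq_or_ne t 0 with rfl | ht
  · have hs : s ≠ 0 := fun hs => hne ⟨hs, rfl⟩
    rw [zero_smul, add_zero, smul_eq_zero, or_iff_right hs] at hst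
    simp [hst]
  · have hty : t • y = -(s • x) := eq_neg_of_add_eq_zero_right hst
    have hxy : x * y = (-(t⁻¹ * s)) • (x * x) := by
      rw [← inv_smul_smul₀ ht y, hty, mul_smul_comm, mul_neg, mul_smul_comm]
      module
    rw [hxy]
    exact smul_mem _ _ (one_le_span_one_insert _ (hsq x hx))

lemma exists_mul_sub_smul_mem_span (hcod : Codisjoint (1 : Submodule k A) S) {x : A}
    (hxx : x * x ∈ (1 : Submodule k A)) (hxS : ∀ s ∈ S, x * s ∈ span k {1, x, s}) :
    ∃ c : k, ∀ z : A, x * z - c • z ∈ span k {(1 : A), x} := by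
  set W := span k {(1 : A), x}
  have hW : W ≤ W.comap (LinearMap.mulLeft k x) := fun w hw => mul_mem_span_one_pair hxx hw
  have hdep : ∀ v, ¬LinearIndependent k ![v, W.mapQ W _ hW v] := by
    intro v
    obtain ⟨z, rfl⟩ := W.mkQ_surjective v
    obtain ⟨r, s, hs, rfl⟩ := exists_eq_smul_one_add_of_codisjoint hcod z
    obtain ⟨a, b, γ, hγ⟩ := mem_span_triple.mp (hxS s hs)
    -- modulo `W`: `x * (r • 1 + s) ≡ x * s ≡ γ • s ≡ γ • (r • 1 + s)`
    intro hli
    refine neg_ne_zero.mpr one_ne_zero (hli.eq_zero_of_pair (s := γ) (t := -1) ?_).2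
    rw [mkQ_apply, mapQ_apply, LinearMap.mulLeft_apply, ← Quotient.mk_smul, ← Quotient.mk_smul,
      ← Quotient.mk_add, Quotient.mk_eq_zero, mul_add, ← hγ, mul_smul_comm, mul_one]
    convert mem_span_pair.mpr ⟨γ * r - a, -r - b, rfl⟩ using 1
    module
  obtain ⟨c, hc⟩ := LinearMap.exists_eq_smul_id_of_forall_notLinearIndependent hdep
  refine ⟨c, fun z => (Submodule.Quotient.eq W).mp ?_⟩
  simpa using LinearMap.congr_fun hc (Submodule.Quotient.mk z)

lemma mul_eq_of_forall_basis {ι : Type*} (b : Basis ι k S) (φ : S →ₗ[k] k)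
    (h : ∀ i j, (b i : A) * b j =
      (φ (b i) * φ (b j)) • 1 + φ (b i) • (b j : A) - φ (b j) • (b i : A))
    (x y : S) : (x : A) * y = (φ x * φ y) • 1 + φ x • (y : A) - φ y • (x : A) := by
  let B : S →ₗ[k] S →ₗ[k] A := LinearMap.mk₂ k (fun x y => (x : A) * y)
    (fun _ _ _ => by simp [add_mul]) (fun _ _ _ => by simp) (fun _ _ _ => by simp [mul_add])
    (fun _ _ _ => by simp)
  let B' : S →ₗ[k] S →ₗ[k] A :=
    LinearMap.mk₂ k (fun x y => (φ x * φ y) • 1 + φ x • (y : A) - φ y • (x : A))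
      (fun _ _ _ => by simp only [map_add, coe_add]; module)
      (fun _ _ _ => by simp only [map_smul, coe_smul, smul_eq_mul]; module)
      (fun _ _ _ => by simp only [map_add, coe_add]; module)
      (fun _ _ _ => by simp only [map_smul, coe_smul, smul_eq_mul]; module)
  exact LinearMap.congr_fun₂ (LinearMap.ext_basis b b h : B = B') x y

lemma exists_linearMap_mul_eq (hcompl : IsCompl (1 : Submodule k A) S)
    (hsq : ∀ x ∈ S, x * x ∈ (1 : Submodule k A)) (hrank : 2 < finrank k A)
    (hH : ∀ x ∈ S, ∀ y ∈ S, x * y ∈ span k {1, x, y}) :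
    ∃ φ : S →ₗ[k] k,
      ∀ x y : S, (x : A) * y = (φ x * φ y) • 1 + φ x • (y : A) - φ y • (x : A) := by
  have hW (x : A) : span k {(1 : A), x} ≠ ⊤ := fun h => by
    classical
    have := finrank_span_le_card (R := k) ({1, x} : Set A)
    rw [h, finrank_top, Set.toFinset_insert, Set.toFinset_singleton] at this
    have := this.trans Finset.card_le_two
    omega
  choose c hc using fun x : S =>
    exists_mul_sub_smul_mem_span hcompl.codisjoint (hsq x x.2) (hH x x.2)
  have hcc (x : S) : (x : A) * x = (c x * c x) • 1 := by
    obtain ⟨q, hq⟩ := exists_eq_smul_one_of_mem_one (hsq x x.2)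
    rw [hq, sq_eq_of_mul_sub_smul_mem_span hq (hc x) (hW x)]
  let b := Basis.ofVectorSpace k S
  refine ⟨b.constr k (c ∘ b), mul_eq_of_forall_basis b _ fun i j => ?_⟩
  simp only [Basis.constr_basis, Function.comp]
  rcases eq_or_ne i j with rfl | hij
  · rw [hcc]
    module
  · refine mul_eq_of_mul_sub_smul_mem_span (hc _) (hc _) (hcc _)
      (mul_add_mul_swap_mem_one hsq (b i).2 (b j).2)
      (linearIndependent_one_pair hcompl.disjoint (b i).2 (b j).2 ?_)
    exact LinearIndependent.pair_iff.mpr fun s t h =>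
      (b.linearIndependent_pair_of_ne hij).eq_zero_of_pair (Subtype.ext (by simpa using h))

lemma finrank_add_one_eq_of_isCompl [FiniteDimensional k A] [Nontrivial A]
    (hcompl : IsCompl (1 : Submodule k A) S) : finrank k S + 1 = finrank k A := by
  rw [← finrank_add_eq_of_isCompl hcompl, one_eq_span, finrank_span_singleton one_ne_zero,
    add_comm]

lemma nonempty_algEquiv_trivSqZeroExt [Nontrivial A] (hcompl : IsCompl (1 : Submodule k A) S)
    (hS : ∀ x ∈ S, ∀ y ∈ S, x * y = 0) {n : ℕ} (e : (Fin n → k) ≃ₗ[k] S) :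
    Nonempty (A ≃ₐ[k] TrivSqZeroExt k (Fin n → k)) := by
  let g : (Fin n → k) →ₗ[k] A := S.subtype ∘ₗ e.toLinearMap
  let F := TrivSqZeroExt.lift (Algebra.ofId k A) g (fun v w => hS _ (e v).2 _ (e w).2)
    (fun r v => by rw [map_smul, Algebra.ofId_apply, Algebra.smul_def])
    (fun r v => by
      rw [op_smul_eq_smul, map_smul, Algebra.ofId_apply, Algebra.smul_def, Algebra.commutes])
  have hF (z : TrivSqZeroExt k (Fin n → k)) : F z = z.fst • 1 + e z.snd := by
    rw [show F z = _ from TrivSqZeroExt.lift_def .., Algebra.ofId_apply,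
      Algebra.algebraMap_eq_smul_one]
    rfl
  refine ⟨(AlgEquiv.ofBijective F
    ⟨(injective_iff_map_eq_zero F).mpr fun z hz => ?_, fun a => ?_⟩).symm⟩
  · rw [hF, add_eq_zero_iff_eq_neg] at hz
    have h1 : z.fst • (1 : A) = 0 := disjoint_def.mp hcompl.disjoint _
      (smul_mem _ _ (one_le.mp le_rfl)) (hz ▸ neg_mem (e z.snd).2)
    have hfst : z.fst = 0 := (smul_eq_zero.mp h1).resolve_right one_ne_zero
    rw [h1, zero_eq_neg, ZeroMemClass.coe_eq_zero, LinearEquiv.map_eq_zero_iff] at hz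
    exact TrivSqZeroExt.ext hfst hz
  · obtain ⟨r, s, hs, rfl⟩ := exists_eq_smul_one_add_of_codisjoint hcompl.codisjoint a
    exact ⟨TrivSqZeroExt.inl r + TrivSqZeroExt.inr (e.symm ⟨s, hs⟩), by simp [hF]⟩

lemma top_le_span_idempotent_ker (h2 : (2 : k) ≠ 0) (hcompl : IsCompl (1 : Submodule k A) S)
    {φ : S →ₗ[k] k} {D : S} (hD : φ D = 1) (u : Basis (Fin 2) k (LinearMap.ker φ)) :
    ⊤ ≤ span k (Set.range ![(2⁻¹ : k) • (1 + (D : A)), 1 - (2⁻¹ : k) • (1 + (D : A)),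
      ((u 0 : S) : A), ((u 1 : S) : A)]) := by
  intro z _
  obtain ⟨r, s, hs, rfl⟩ := exists_eq_smul_one_add_of_codisjoint hcompl.codisjoint z
  let w : LinearMap.ker φ := ⟨⟨s, hs⟩ - φ ⟨s, hs⟩ • D, by simp [hD]⟩
  have hs' : s = φ ⟨s, hs⟩ • (D : A) + u.repr w 0 • ((u 0 : S) : A) +
      u.repr w 1 • ((u 1 : S) : A) := by
    have := congrArg (fun v : LinearMap.ker φ => ((v : S) : A)) (u.sum_repr w)
    simp only [Fin.sum_univ_two, Submodule.coe_add, Submodule.coe_smul] at this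
    rw [add_assoc]
    exact eq_add_of_sub_eq' this.symm
  refine (mem_span_range_iff_exists_fun k).mpr
    ⟨![r + φ ⟨s, hs⟩, r - φ ⟨s, hs⟩, u.repr w 0, u.repr w 1], ?_⟩
  rw [Fin.sum_univ_four]
  conv_rhs => rw [hs']
  simp only [Matrix.cons_val]
  match_scalars <;> field_simp <;> ring

lemma nonempty_algEquiv_kroneckerAlgebra_of_ne_zero (h2 : (2 : k) ≠ 0)
    (hcompl : IsCompl (1 : Submodule k A) S) (hrank : finrank k A = 4) {φ : S →ₗ[k] k}
    (hφ : φ ≠ 0)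
    (hmul : ∀ x y : S, (x : A) * y = (φ x * φ y) • 1 + φ x • (y : A) - φ y • (x : A)) :
    Nonempty (A ≃ₐ[k] kroneckerAlgebra k) := by
  have : FiniteDimensional k A := .of_finrank_eq_succ hrank
  have : Nontrivial A := nontrivial_of_finrank_pos (R := k) (by omega)
  obtain ⟨x, hx⟩ : ∃ x, φ x ≠ 0 := by
    by_contra! h
    exact hφ (LinearMap.ext h)
  set D := (φ x)⁻¹ • x
  have hD : φ D = 1 := by simp [D, hx]
  have hker : finrank k (LinearMap.ker φ) = 2 := by
    have h := LinearMap.finrank_range_add_finrank_ker φ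
    have hS := finrank_add_one_eq_of_isCompl hcompl
    rw [LinearMap.range_eq_top.mpr fun c => ⟨c • D, by simp [hD]⟩, finrank_top,
      finrank_self] at h
    omega
  have : Module.Free k (LinearMap.ker φ) := .of_divisionRing k (LinearMap.ker φ)
  let u := Module.finBasisOfFinrankEq k (LinearMap.ker φ) hker
  have hu (i) : φ (u i) = 0 := LinearMap.mem_ker.mp (u i).2
  have hDD : (D : A) * D = 1 := by rw [hmul, hD]; module
  have hDu (i) : (D : A) * (u i : S) = (u i : S) := by rw [hmul, hD, hu]; module
  have huD (i) : ((u i : S) : A) * D = -(u i : S) := by rw [hmul, hD, hu]; module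
  set e : A := (2⁻¹ : k) • (1 + (D : A))
  have he : e * e = e := by
    simp only [e, smul_mul_smul_comm, add_mul, mul_add, one_mul, mul_one, hDD]
    match_scalars <;> field_simp <;> ring
  have heu (i) : e * (u i : S) = (u i : S) := by
    simp only [e, smul_mul_assoc, add_mul, one_mul, hDu]
    match_scalars
    field_simp
    ring
  have hue (i) : ((u i : S) : A) * e = 0 := by
    simp only [e, mul_smul_comm, mul_add, mul_one, huD, add_neg_cancel, smul_zero]
  exact nonempty_algEquiv_kroneckerAlgebra hrank he (heu 0) (hue 0) (heu 1) (hue 1)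
    (top_le_span_idempotent_ker h2 hcompl hD u)

end Algebra

theorem stmt7_general (k A : Type*) [Field k] (h2 : (2 : k) ≠ 0)
    [Ring A] [Algebra k A] (hrank : Module.finrank k A = 4)
    (S : Submodule k A)
    (hcompl : IsCompl (1 : Submodule k A) S)
    (hsq : ∀ x ∈ S, x * x ∈ (1 : Submodule k A)) :
    (∃ Q : QuadraticForm k (Fin 2 → k), Nonempty (A ≃ₐ[k] CliffordAlgebra Q)) ∨
    Nonempty (A ≃ₐ[k] TrivSqZeroExt k (Fin 3 → k)) ∨
    Nonempty (A ≃ₐ[k] kroneckerAlgebra k) := by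
  have : FiniteDimensional k A := .of_finrank_eq_succ hrank
  have : Nontrivial A := nontrivial_of_finrank_pos (R := k) (by omega)
  by_cases hH : ∀ x ∈ S, ∀ y ∈ S, x * y ∈ span k {1, x, y}
  · obtain ⟨φ, hφ⟩ := exists_linearMap_mul_eq hcompl hsq (by omega) hH
    right
    rcases eq_or_ne φ 0 with rfl | hφ0
    · have hS : finrank k (Fin 3 → k) = finrank k S := by
        have := finrank_add_one_eq_of_isCompl hcompl
        simp only [finrank_fin_fun]
        omega
      refine Or.inl (nonempty_algEquiv_trivSqZeroExt hcompl (fun x hx y hy => ?_)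
        (LinearEquiv.ofFinrankEq _ _ hS))
      simpa using hφ ⟨x, hx⟩ ⟨y, hy⟩
    · exact Or.inr (nonempty_algEquiv_kroneckerAlgebra_of_ne_zero h2 hcompl hrank hφ0 hφ)
  · obtain ⟨x, hx, y, hy, hxy⟩ : ∃ x ∈ S, ∃ y ∈ S, x * y ∉ span k {1, x, y} := by
      simpa using hH
    obtain ⟨a, ha⟩ := exists_eq_smul_one_of_mem_one (hsq x hx)
    obtain ⟨b, hb⟩ := exists_eq_smul_one_of_mem_one (hsq y hy)
    obtain ⟨p, hp⟩ := exists_eq_smul_one_of_mem_one (mul_add_mul_swap_mem_one hsq hx hy)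
    exact Or.inl (exists_algEquiv_cliffordAlgebra hrank ha hb hp
      (linearIndependent_one_mul_of_mul_notMem_span hsq hcompl.disjoint hx hy hxy))

/-- Over an algebraically closed field `k` of characteristic `≠ 2`,
a 4-dimensional `k`-algebra with a quaternion structure is either a Clifford algebra
of a binary quadratic form, or `k[x,y,z]/(x,y,z)²`, or the Kronecker algebra. -/
theorem stmt7 (k A : Type*) [Field k] [IsAlgClosed k] (h2 : (2 : k) ≠ 0)
    [Ring A] [Algebra k A] (hrank : Module.finrank k A = 4)
    (S : Submodule k A)
    (hcompl : IsCompl (1 : Submodule k A) S)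
    (hsq : ∀ x ∈ S, x * x ∈ (1 : Submodule k A)) :
    (∃ Q : QuadraticForm k (Fin 2 → k), Nonempty (A ≃ₐ[k] CliffordAlgebra Q)) ∨
    Nonempty (A ≃ₐ[k] TrivSqZeroExt k (Fin 3 → k)) ∨
    Nonempty (A ≃ₐ[k] kroneckerAlgebra k) :=
  stmt7_general k A h2 hrank S hcompl hsq
end

section
/- Let R be a commutative ring in which 2 is invertible, Q a quadratic form on R³ (on Fin 3 → R) with standard basis e₀, e₁, e₂, and set q i j = (1/2)·polar Q eᵢ eⱼ (so q i i = Q(eᵢ)). In the Clifford algebra Cl(Q), let T be the R-submodule spanned by the three elements ι(e₀)·ι(e₁) − (q 0 1)·1, ι(e₁)·ι(e₂) − (q 1 2)·1 and ι(e₂)·ι(e₀) − (q 2 0)·1. Then the underlying R-submodule of the even Clifford algebra Cl₀(Q) is the internal direct sum of R·1 and T (their intersection is zero and their sum is the submodule underlying Cl₀(Q)), and x·x ∈ R·1 for every x ∈ T. In particular Cl₀(Q) carries a quaternion structure. -/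
set_option linter.unusedSectionVars false
set_option maxHeartbeats 1000000

open CliffordAlgebra QuadraticMap

section Aux
variable {R : Type*} [CommRing R] [Invertible (2 : R)]
variable {M : Type*} [AddCommGroup M] [Module R M]
variable (Q : QuadraticForm R M) (e : Fin 3 → M)

/-- The span of 1 and the three coordinate bivectors. -/
noncomputable def stmt9S : Submodule R (CliffordAlgebra Q) :=
  Submodule.span R {1, ι Q (e 0) * ι Q (e 1), ι Q (e 1) * ι Q (e 2), ι Q (e 2) * ι Q (e 0)}

theorem stmt9_one_mem : (1 : CliffordAlgebra Q) ∈ stmt9S Q e :=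
  Submodule.subset_span (by simp)

theorem stmt9_ee01_mem : ι Q (e 0) * ι Q (e 1) ∈ stmt9S Q e :=
  Submodule.subset_span (by simp)

theorem stmt9_ee12_mem : ι Q (e 1) * ι Q (e 2) ∈ stmt9S Q e :=
  Submodule.subset_span (by simp)

theorem stmt9_ee20_mem : ι Q (e 2) * ι Q (e 0) ∈ stmt9S Q e :=
  Submodule.subset_span (by simp)

theorem stmt9_hsq2 (i : Fin 3) : ι Q (e i) * ι Q (e i) = Q (e i) • (1 : CliffordAlgebra Q) := by
  rw [ι_sq_scalar, Algebra.algebraMap_eq_smul_one]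

theorem stmt9_hsq' (i : Fin 3) (x : CliffordAlgebra Q) :
    ι Q (e i) * (ι Q (e i) * x) = Q (e i) • x := by
  rw [← mul_assoc, ι_sq_scalar, ← Algebra.smul_def]

theorem stmt9_hswap2 (i j : Fin 3) :
    ι Q (e j) * ι Q (e i)
      = polar Q (e i) (e j) • (1 : CliffordAlgebra Q) - ι Q (e i) * ι Q (e j) := by
  rw [ι_mul_ι_comm, polar_comm, Algebra.algebraMap_eq_smul_one]

theorem stmt9_hswap' (i j : Fin 3) (x : CliffordAlgebra Q) :
    ι Q (e j) * (ι Q (e i) * x)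
      = polar Q (e i) (e j) • x - ι Q (e i) * (ι Q (e j) * x) := by
  rw [← mul_assoc, ι_mul_ι_comm, polar_comm, sub_mul, ← Algebra.smul_def, mul_assoc]

theorem stmt9_ee02_mem : ι Q (e 0) * ι Q (e 2) ∈ stmt9S Q e := by
  rw [show (0 : Fin 3) = (0 : Fin 3) from rfl, stmt9_hswap2 Q e 2 0]
  exact Submodule.sub_mem _ (Submodule.smul_mem _ _ (stmt9_one_mem Q e)) (stmt9_ee20_mem Q e)

theorem stmt9_ee_mem (i j : Fin 3) : ι Q (e i) * ι Q (e j) ∈ stmt9S Q e := by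
  have hd : ∀ k : Fin 3, ι Q (e k) * ι Q (e k) ∈ stmt9S Q e := fun k => by
    rw [stmt9_hsq2]; exact Submodule.smul_mem _ _ (stmt9_one_mem Q e)
  have hsw : ∀ k l : Fin 3, ι Q (e k) * ι Q (e l) ∈ stmt9S Q e →
      ι Q (e l) * ι Q (e k) ∈ stmt9S Q e := fun k l h => by
    rw [stmt9_hswap2]
    exact Submodule.sub_mem _ (Submodule.smul_mem _ _ (stmt9_one_mem Q e)) h
  fin_cases i <;> fin_cases j <;>
    first
      | exact hd _
      | exact stmt9_ee01_mem Q e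
      | exact stmt9_ee12_mem Q e
      | exact stmt9_ee20_mem Q e
      | exact stmt9_ee02_mem Q e
      | exact hsw _ _ (stmt9_ee01_mem Q e)
      | exact hsw _ _ (stmt9_ee12_mem Q e)
      | exact hsw _ _ (stmt9_ee02_mem Q e)

theorem stmt9_prod_mem (i j k l : Fin 3) :
    ι Q (e i) * ι Q (e j) * (ι Q (e k) * ι Q (e l)) ∈ stmt9S Q e := by
  have h10' := stmt9_hswap' Q e 0 1
  have h20' := stmt9_hswap' Q e 0 2
  have h21' := stmt9_hswap' Q e 1 2
  have h10 := stmt9_hswap2 Q e 0 1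
  have h20 := stmt9_hswap2 Q e 0 2
  have h21 := stmt9_hswap2 Q e 1 2
  have hs' := stmt9_hsq' Q e
  have hs := stmt9_hsq2 Q e
  have hmk2 : (⟨2, by omega⟩ : Fin 3) = 2 := rfl
  fin_cases i <;> fin_cases j <;> fin_cases k <;> fin_cases l <;>
    · simp only [Fin.mk_zero, Fin.mk_one, hmk2, Fin.isValue, mul_assoc, h10', h20', h21', hs', h10, h20, h21, hs,
        mul_sub, sub_mul, smul_mul_assoc, mul_smul_comm, smul_sub, smul_smul, mul_one, one_mul]
      repeat'
        first
          | exact stmt9_one_mem Q e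
          | exact stmt9_ee01_mem Q e
          | exact stmt9_ee12_mem Q e
          | exact stmt9_ee20_mem Q e
          | exact stmt9_ee02_mem Q e
          | exact Submodule.zero_mem _
          | apply Submodule.sub_mem
          | apply Submodule.add_mem
          | apply Submodule.neg_mem
          | apply Submodule.smul_mem

theorem stmt9_mul_left_mem (i j : Fin 3) {x : CliffordAlgebra Q} (hx : x ∈ stmt9S Q e) :
    ι Q (e i) * ι Q (e j) * x ∈ stmt9S Q e := by
  induction hx using Submodule.span_induction with
  | mem y hy =>
    simp only [Set.mem_insert_iff, Set.mem_singleton_iff] at hy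
    rcases hy with rfl | rfl | rfl | rfl
    · simpa using stmt9_ee_mem Q e i j
    · exact stmt9_prod_mem Q e i j 0 1
    · exact stmt9_prod_mem Q e i j 1 2
    · exact stmt9_prod_mem Q e i j 2 0
  | zero => simpa using Submodule.zero_mem _
  | add y z _ _ ihy ihz => rw [mul_add]; exact Submodule.add_mem _ ihy ihz
  | smul r y _ ih => rw [mul_smul_comm]; exact Submodule.smul_mem _ _ ih

theorem stmt9_mul_mem {x y : CliffordAlgebra Q} (hx : x ∈ stmt9S Q e)
    (hy : y ∈ stmt9S Q e) : x * y ∈ stmt9S Q e := by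
  induction hx using Submodule.span_induction with
  | mem z hz =>
    simp only [Set.mem_insert_iff, Set.mem_singleton_iff] at hz
    rcases hz with rfl | rfl | rfl | rfl
    · simpa using hy
    · exact stmt9_mul_left_mem Q e 0 1 hy
    · exact stmt9_mul_left_mem Q e 1 2 hy
    · exact stmt9_mul_left_mem Q e 2 0 hy
  | zero => simpa using Submodule.zero_mem _
  | add y' z _ _ ihy ihz => rw [add_mul]; exact Submodule.add_mem _ ihy ihz
  | smul r y' _ ih => rw [smul_mul_assoc]; exact Submodule.smul_mem _ _ ih

theorem stmt9_even_le (hb : ∀ m : M, ∃ c : Fin 3 → R, m = ∑ i, c i • e i) :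
    Subalgebra.toSubmodule (even Q) ≤ stmt9S Q e := by
  intro x hx
  replace hx : x ∈ evenOdd Q 0 := by rwa [← even_toSubmodule]
  induction x, hx using even_induction with
  | algebraMap r =>
    rw [Algebra.algebraMap_eq_smul_one]
    exact Submodule.smul_mem _ _ (stmt9_one_mem Q e)
  | add y z _ _ ihy ihz => exact Submodule.add_mem _ ihy ihz
  | ι_mul_ι_mul m₁ m₂ y _ ih =>
    obtain ⟨c₁, rfl⟩ := hb m₁
    obtain ⟨c₂, rfl⟩ := hb m₂
    have hexp : ι Q (∑ i, c₁ i • e i) * ι Q (∑ j, c₂ j • e j) * y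
        = ∑ i : Fin 3, ∑ j : Fin 3, (c₁ i * c₂ j) • (ι Q (e i) * ι Q (e j) * y) := by
      simp only [map_sum, LinearMap.map_smul, Finset.sum_mul, Finset.mul_sum, smul_mul_assoc,
        mul_smul_comm, smul_smul]
      rw [Finset.sum_comm]
      simp [Finset.smul_sum, smul_smul, mul_comm]
    rw [hexp]
    exact Submodule.sum_mem _ fun i _ => Submodule.sum_mem _ fun j _ =>
      Submodule.smul_mem _ _ (stmt9_mul_left_mem Q e i j ih)

end Aux

/-- For a quadratic form `Q` on `R³` (with 2 invertible), letting
`q i j = ½ polar Q eᵢ eⱼ` and `T` the span of `ι e₀ ι e₁ - q 0 1`, `ι e₁ ι e₂ - q 1 2`,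
`ι e₂ ι e₀ - q 2 0` inside the Clifford algebra, the even Clifford algebra is the
internal direct sum of `R·1` and `T`, and `x² ∈ R·1` for every `x ∈ T`; so the even
Clifford algebra carries a quaternion structure. -/
theorem stmt9 (R : Type*) [CommRing R] [Invertible (2 : R)]
    (Q : QuadraticForm R (Fin 3 → R))
    (e : Fin 3 → (Fin 3 → R)) (he : ∀ i, e i = Pi.single i 1)
    (q : Fin 3 → Fin 3 → R)
    (hq : ∀ i j, q i j = ⅟(2 : R) * QuadraticMap.polar Q (e i) (e j))
    (T : Submodule R (CliffordAlgebra Q))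
    (hT : T = Submodule.span R
      {CliffordAlgebra.ι Q (e 0) * CliffordAlgebra.ι Q (e 1)
          - algebraMap R (CliffordAlgebra Q) (q 0 1),
        CliffordAlgebra.ι Q (e 1) * CliffordAlgebra.ι Q (e 2)
          - algebraMap R (CliffordAlgebra Q) (q 1 2),
        CliffordAlgebra.ι Q (e 2) * CliffordAlgebra.ι Q (e 0)
          - algebraMap R (CliffordAlgebra Q) (q 2 0)}) :
    Disjoint (1 : Submodule R (CliffordAlgebra Q)) T ∧
    (1 : Submodule R (CliffordAlgebra Q)) ⊔ T
        = Subalgebra.toSubmodule (CliffordAlgebra.even Q) ∧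
    ∀ x ∈ T, x * x ∈ (1 : Submodule R (CliffordAlgebra Q)) := by
  classical
  have hb : ∀ m : Fin 3 → R, ∃ c : Fin 3 → R, m = ∑ i, c i • e i := fun m =>
    ⟨m, by
      ext j
      simp [he, Pi.single_apply]⟩
  have hpol : ∀ i j, QuadraticMap.polar Q (e i) (e j) = 2 * q i j := fun i j => by
    rw [hq, ← mul_assoc, mul_invOf_self, one_mul]
  have hTS : T ≤ stmt9S Q e := by
    rw [hT]
    refine Submodule.span_le.2 ?_
    rintro x (rfl | rfl | rfl) <;>
      refine Submodule.sub_mem _ ?_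
        (by rw [Algebra.algebraMap_eq_smul_one]
            exact Submodule.smul_mem _ _ (stmt9_one_mem Q e))
    · exact stmt9_ee_mem Q e 0 1
    · exact stmt9_ee_mem Q e 1 2
    · exact stmt9_ee_mem Q e 2 0
  have hsupS : (1 : Submodule R (CliffordAlgebra Q)) ⊔ T = stmt9S Q e := by
    apply le_antisymm
    · exact sup_le (Submodule.one_le.2 (stmt9_one_mem Q e)) hTS
    · refine Submodule.span_le.2 ?_
      have hgen : ∀ i j : Fin 3,
          (CliffordAlgebra.ι Q (e i) * CliffordAlgebra.ι Q (e j)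
              - algebraMap R (CliffordAlgebra Q) (q i j)) ∈ T →
          CliffordAlgebra.ι Q (e i) * CliffordAlgebra.ι Q (e j)
            ∈ (1 : Submodule R (CliffordAlgebra Q)) ⊔ T := fun i j hmem => by
        have hd : CliffordAlgebra.ι Q (e i) * CliffordAlgebra.ι Q (e j)
            = (CliffordAlgebra.ι Q (e i) * CliffordAlgebra.ι Q (e j)
                - algebraMap R (CliffordAlgebra Q) (q i j))
              + algebraMap R (CliffordAlgebra Q) (q i j) := by
          rw [sub_add_cancel]
        rw [hd]
        exact Submodule.add_mem _ (Submodule.mem_sup_right hmem)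
          (Submodule.mem_sup_left (Submodule.algebraMap_mem _))
      rintro x (rfl | rfl | rfl | rfl)
      · exact Submodule.one_le.1 le_sup_left
      · exact hgen 0 1 (hT ▸ Submodule.subset_span (by simp))
      · exact hgen 1 2 (hT ▸ Submodule.subset_span (by simp))
      · exact hgen 2 0 (hT ▸ Submodule.subset_span (by simp))
  have hrev : ∀ x ∈ T, CliffordAlgebra.reverse x = -x := by
    intro x hx
    rw [hT] at hx
    have key : ∀ i j : Fin 3,
        CliffordAlgebra.reverse (CliffordAlgebra.ι Q (e i) * CliffordAlgebra.ι Q (e j)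
            - algebraMap R (CliffordAlgebra Q) (q i j))
          = -(CliffordAlgebra.ι Q (e i) * CliffordAlgebra.ι Q (e j)
            - algebraMap R (CliffordAlgebra Q) (q i j)) := fun i j => by
      rw [_root_.map_sub, CliffordAlgebra.reverse.map_mul, CliffordAlgebra.reverse_ι,
        CliffordAlgebra.reverse_ι, CliffordAlgebra.reverse.commutes,
        CliffordAlgebra.ι_mul_ι_comm, QuadraticMap.polar_comm, hpol, two_mul, _root_.map_add]
      abel
    induction hx using Submodule.span_induction with
    | mem y hy =>
      simp only [Set.mem_insert_iff, Set.mem_singleton_iff] at hy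
      rcases hy with rfl | rfl | rfl
      exacts [key 0 1, key 1 2, key 2 0]
    | zero => simp
    | add y z _ _ ihy ihz => rw [_root_.map_add, ihy, ihz, neg_add]
    | smul r y _ ih => rw [_root_.map_smul, ih, smul_neg]
  have half : ∀ y : CliffordAlgebra Q, y = -y → y = 0 := fun y h => by
    have h2 : (2 : R) • y = 0 := by
      rw [two_smul]
      nth_rw 2 [h]
      rw [add_neg_cancel]
    calc y = ((⅟(2:R) * 2)) • y := by rw [invOf_mul_self, one_smul]
      _ = ⅟(2:R) • ((2:R) • y) := by rw [mul_smul]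
      _ = 0 := by rw [h2, smul_zero]
  refine ⟨?_, ?_, ?_⟩
  · refine Submodule.disjoint_def.mpr fun x hx1 hxT => ?_
    obtain ⟨r, rfl⟩ := Submodule.mem_one.mp hx1
    have h1 := hrev _ hxT
    rw [CliffordAlgebra.reverse.commutes] at h1
    exact half _ h1
  · rw [hsupS]
    refine le_antisymm ?_ (stmt9_even_le Q e hb)
    refine Submodule.span_le.2 ?_
    have hee : ∀ i j : Fin 3, CliffordAlgebra.ι Q (e i) * CliffordAlgebra.ι Q (e j)
        ∈ Subalgebra.toSubmodule (CliffordAlgebra.even Q) := fun i j => by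
      rw [CliffordAlgebra.even_toSubmodule]
      exact CliffordAlgebra.ι_mul_ι_mem_evenOdd_zero Q _ _
    rintro x (rfl | rfl | rfl | rfl)
    · exact (CliffordAlgebra.even Q).one_mem
    · exact hee 0 1
    · exact hee 1 2
    · exact hee 2 0
  · intro x hx
    have hxS : x ∈ stmt9S Q e := hTS hx
    have hsq : x * x ∈ (1 : Submodule R (CliffordAlgebra Q)) ⊔ T := by
      rw [hsupS]
      exact stmt9_mul_mem Q e hxS hxS
    obtain ⟨u, hu, t, ht, hx2⟩ := Submodule.mem_sup.mp hsq
    obtain ⟨r, rfl⟩ := Submodule.mem_one.mp hu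
    have hrx : CliffordAlgebra.reverse (x * x) = x * x := by
      rw [CliffordAlgebra.reverse.map_mul, hrev x hx, neg_mul_neg]
    rw [← hx2, map_add, CliffordAlgebra.reverse.commutes, hrev t ht] at hrx
    have ht0 : t = 0 := half t (add_left_cancel hrx).symm
    rw [← hx2, ht0, add_zero]
    exact Submodule.algebraMap_mem r
end

section
/- Let R be a commutative ring in which 2 is invertible, Q a quadratic form on R³ (on Fin 3 → R) with standard basis e₀, e₁, e₂, and let M be the symmetric 3×3 Gram matrix with entries M i j = (1/2)·polar Q eᵢ eⱼ (so M i i = Q(eᵢ)). In the Clifford algebra Cl(Q) define X̄₀ = ι(e₁)·ι(e₂) − (M 1 2)·1, X̄₁ = ι(e₂)·ι(e₀) − (M 2 0)·1, X̄₂ = ι(e₀)·ι(e₁) − (M 0 1)·1. Then for all i, j ∈ {0,1,2} one has X̄ᵢ·X̄ⱼ + X̄ⱼ·X̄ᵢ = (−2·(adjugate M) i j)·1 in Cl(Q); that is, the trace pairing on the traceless part of the even Clifford algebra is given by minus the adjugate of the Gram matrix. -/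
section helperSec
variable {R A : Type*} [CommRing R] [Ring A] [Algebra R A]

local notation "⟪" x "⟫" => algebraMap R A x

theorem stmt10_keyO (a b c : A) (m00 m11 m22 m01 m02 m12 : R)
    (haa : a*a = ⟪m00⟫) (hbb : b*b = ⟪m11⟫) (hcc : c*c = ⟪m22⟫)
    (hab : a*b + b*a = ⟪2*m01⟫) (hac : a*c + c*a = ⟪2*m02⟫) (hbc : b*c + c*b = ⟪2*m12⟫) :
    (b*c - ⟪m12⟫) * (c*a - ⟪m02⟫) + (c*a - ⟪m02⟫) * (b*c - ⟪m12⟫)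
      = ⟪-2*(m12*m02 - m01*m22)⟫ := by
  have hba : b*a = ⟪2*m01⟫ - a*b := eq_sub_of_add_eq' hab
  have hca : c*a = ⟪2*m02⟫ - a*c := eq_sub_of_add_eq' hac
  have hcb : c*b = ⟪2*m12⟫ - b*c := eq_sub_of_add_eq' hbc
  have hba' : ∀ x : A, b*(a*x) = ⟪2*m01⟫*x - a*(b*x) := fun x => by
    rw [← mul_assoc, hba, sub_mul, mul_assoc]
  have hca' : ∀ x : A, c*(a*x) = ⟪2*m02⟫*x - a*(c*x) := fun x => by
    rw [← mul_assoc, hca, sub_mul, mul_assoc]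
  have hcb' : ∀ x : A, c*(b*x) = ⟪2*m12⟫*x - b*(c*x) := fun x => by
    rw [← mul_assoc, hcb, sub_mul, mul_assoc]
  have haa' : ∀ x : A, a*(a*x) = ⟪m00⟫*x := fun x => by rw [← mul_assoc, haa]
  have hbb' : ∀ x : A, b*(b*x) = ⟪m11⟫*x := fun x => by rw [← mul_assoc, hbb]
  have hcc' : ∀ x : A, c*(c*x) = ⟪m22⟫*x := fun x => by rw [← mul_assoc, hcc]
  simp only [mul_sub, sub_mul, mul_add, add_mul, mul_assoc, hba', hca', hcb', haa', hbb', hcc',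
    haa, hbb, hcc, hba, hca, hcb]
  simp only [Algebra.algebraMap_eq_smul_one, smul_mul_assoc, mul_smul_comm, one_mul, mul_one,
    smul_smul]
  module

theorem stmt10_keyD (a b c : A) (m00 m11 m22 m01 m02 m12 : R)
    (haa : a*a = ⟪m00⟫) (hbb : b*b = ⟪m11⟫) (hcc : c*c = ⟪m22⟫)
    (hab : a*b + b*a = ⟪2*m01⟫) (hac : a*c + c*a = ⟪2*m02⟫) (hbc : b*c + c*b = ⟪2*m12⟫) :
    (b*c - ⟪m12⟫) * (b*c - ⟪m12⟫) + (b*c - ⟪m12⟫) * (b*c - ⟪m12⟫)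
      = ⟪-2*(m11*m22 - m12*m12)⟫ := by
  have hcb : c*b = ⟪2*m12⟫ - b*c := eq_sub_of_add_eq' hbc
  have hcb' : ∀ x : A, c*(b*x) = ⟪2*m12⟫*x - b*(c*x) := fun x => by
    rw [← mul_assoc, hcb, sub_mul, mul_assoc]
  have hbb' : ∀ x : A, b*(b*x) = ⟪m11⟫*x := fun x => by rw [← mul_assoc, hbb]
  have hcc' : ∀ x : A, c*(c*x) = ⟪m22⟫*x := fun x => by rw [← mul_assoc, hcc]
  simp only [mul_sub, sub_mul, mul_add, add_mul, mul_assoc, hcb', hbb', hcc',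
    hbb, hcc, hcb]
  simp only [Algebra.algebraMap_eq_smul_one, smul_mul_assoc, mul_smul_comm, one_mul, mul_one,
    smul_smul]
  module

end helperSec

/-- For a quadratic form `Q` on `R³` (2 invertible) with Gram matrix
`M i j = ½ polar Q eᵢ eⱼ`, the elements `X̄₀ = ι e₁ ι e₂ - M 1 2`,
`X̄₁ = ι e₂ ι e₀ - M 2 0`, `X̄₂ = ι e₀ ι e₁ - M 0 1` of the Clifford algebra satisfy
`X̄ᵢ X̄ⱼ + X̄ⱼ X̄ᵢ = (-2 · adjugate M i j) · 1`: the trace pairing on the traceless part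
of the even Clifford algebra is minus the adjugate of the Gram matrix. -/
theorem stmt10 (R : Type*) [CommRing R] [Invertible (2 : R)]
    (Q : QuadraticForm R (Fin 3 → R))
    (e : Fin 3 → (Fin 3 → R)) (he : ∀ i, e i = Pi.single i 1)
    (M : Matrix (Fin 3) (Fin 3) R)
    (hM : ∀ i j, M i j = ⅟(2 : R) * QuadraticMap.polar Q (e i) (e j))
    (X : Fin 3 → CliffordAlgebra Q)
    (hX0 : X 0 = CliffordAlgebra.ι Q (e 1) * CliffordAlgebra.ι Q (e 2)
        - algebraMap R (CliffordAlgebra Q) (M 1 2))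
    (hX1 : X 1 = CliffordAlgebra.ι Q (e 2) * CliffordAlgebra.ι Q (e 0)
        - algebraMap R (CliffordAlgebra Q) (M 2 0))
    (hX2 : X 2 = CliffordAlgebra.ι Q (e 0) * CliffordAlgebra.ι Q (e 1)
        - algebraMap R (CliffordAlgebra Q) (M 0 1)) :
    ∀ i j : Fin 3,
      X i * X j + X j * X i
        = algebraMap R (CliffordAlgebra Q) (-2 * M.adjugate i j) := by
  have hsym : ∀ i j, M i j = M j i := fun i j => by
    rw [hM, hM, QuadraticMap.polar_comm]
  have hdiag : ∀ i, CliffordAlgebra.ι Q (e i) * CliffordAlgebra.ι Q (e i)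
      = algebraMap R (CliffordAlgebra Q) (M i i) := fun i => by
    rw [CliffordAlgebra.ι_sq_scalar, hM, QuadraticMap.polar_self, two_smul, ← two_mul,
      invOf_mul_cancel_left']
  have hpol : ∀ i j, CliffordAlgebra.ι Q (e i) * CliffordAlgebra.ι Q (e j)
      + CliffordAlgebra.ι Q (e j) * CliffordAlgebra.ι Q (e i)
      = algebraMap R (CliffordAlgebra Q) (2 * M i j) := fun i j => by
    rw [CliffordAlgebra.ι_mul_ι_add_swap, hM, mul_invOf_cancel_left']
  set a := CliffordAlgebra.ι Q (e 0)
  set b := CliffordAlgebra.ι Q (e 1)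
  set c := CliffordAlgebra.ι Q (e 2)
  -- rewrite X's in symmetric-index form
  have hX1' : X 1 = c * a - algebraMap R (CliffordAlgebra Q) (M 0 2) := by
    rw [hX1, hsym 2 0]
  -- the six key identities
  have h00 := stmt10_keyD a b c (M 0 0) (M 1 1) (M 2 2) (M 0 1) (M 0 2) (M 1 2)
    (hdiag 0) (hdiag 1) (hdiag 2) (hpol 0 1) (hpol 0 2) (hpol 1 2)
  have h01 := stmt10_keyO a b c (M 0 0) (M 1 1) (M 2 2) (M 0 1) (M 0 2) (M 1 2)
    (hdiag 0) (hdiag 1) (hdiag 2) (hpol 0 1) (hpol 0 2) (hpol 1 2)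
  -- cyclic permutation a→b→c→a, indices 0→1→2→0
  have h11 := stmt10_keyD b c a (M 1 1) (M 2 2) (M 0 0) (M 1 2) (M 1 0) (M 2 0)
    (hdiag 1) (hdiag 2) (hdiag 0) (hpol 1 2) (hpol 1 0) (hpol 2 0)
  have h12 := stmt10_keyO b c a (M 1 1) (M 2 2) (M 0 0) (M 1 2) (M 1 0) (M 2 0)
    (hdiag 1) (hdiag 2) (hdiag 0) (hpol 1 2) (hpol 1 0) (hpol 2 0)
  have h22 := stmt10_keyD c a b (M 2 2) (M 0 0) (M 1 1) (M 2 0) (M 2 1) (M 0 1)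
    (hdiag 2) (hdiag 0) (hdiag 1) (hpol 2 0) (hpol 2 1) (hpol 0 1)
  have h20 := stmt10_keyO c a b (M 2 2) (M 0 0) (M 1 1) (M 2 0) (M 2 1) (M 0 1)
    (hdiag 2) (hdiag 0) (hdiag 1) (hpol 2 0) (hpol 2 1) (hpol 0 1)
  simp only [hsym 1 0, hsym 2 0, hsym 2 1] at h11 h12 h22 h20
  intro i j
  have hadj := Matrix.adjugate_fin_three M
  fin_cases i <;> fin_cases j <;>
    simp only [Fin.zero_eta, Fin.mk_one, Fin.reduceFinMk, Fin.isValue, hadj, Matrix.of_apply, Matrix.cons_val', Matrix.cons_val_zero,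
      Matrix.cons_val_one, Matrix.head_cons, Matrix.empty_val', Matrix.cons_val_fin_one,
      Matrix.head_fin_const, Matrix.cons_val_two, Matrix.tail_cons] <;>
    [ (rw [hX0, h00]);
      (rw [hX0, hX1', h01]);
      (rw [hX0, hX2, add_comm, h20]);
      (rw [hX0, hX1', add_comm, h01]);
      (rw [hX1', h11]);
      (rw [hX1', hX2, h12]);
      (rw [hX0, hX2, h20]);
      (rw [hX1', hX2, add_comm, h12]);
      (rw [hX2, h22])] <;>
    (congr 1; try simp only [hsym 1 0, hsym 2 0, hsym 2 1]; try ring)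
end
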